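/- arXiv:1410.3418 — 6 statements merged into one kernel-verified Lean document; each statement's English description precedes it below -/
import Mathlib

section
/- At every point of U the identity −JD = (D · JC) C + Σ_{i,j=1}^{2N} g^{ij} w_j ∂D/∂u_i holds. (Second identity of Lemma 2.2(a).) -/
open scoped RealInnerProductSpace BigOperators

/-- Partial derivative of `f` in the `i`-th coordinate direction. -/
noncomputable def pd {ι : Type*} [Fintype ι] [DecidableEq ι]
    {F : Type*} [NormedAddCommGroup F] [NormedSpace ℝ F]
    (i : ι) (f : EuclideanSpace ℝ ι → F) (u : EuclideanSpace ℝ ι) : F :=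
  fderiv ℝ f u (EuclideanSpace.single i 1)

/-- Euclidean dot product on `ℝ^m × ℝ^m ≅ ℝ^{2m}`. -/
noncomputable def dot {m : ℕ} (p q : EuclideanSpace ℝ (Fin m) × EuclideanSpace ℝ (Fin m)) : ℝ :=
  @inner ℝ _ _ p.1 q.1 + @inner ℝ _ _ p.2 q.2

/-- The complex structure `J(x, y) = (−y, x)` on `ℝ^m × ℝ^m ≅ ℂ^m`. -/
def Jmap {m : ℕ} (p : EuclideanSpace ℝ (Fin m) × EuclideanSpace ℝ (Fin m)) :
    EuclideanSpace ℝ (Fin m) × EuclideanSpace ℝ (Fin m) :=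
  (-p.2, p.1)

/- ### Auxiliary lemmas -/

lemma orth_zero_of_gram_inj {E' : Type*} [NormedAddCommGroup E'] [InnerProductSpace ℝ E']
    [FiniteDimensional ℝ E'] {ι : Type*} [Fintype ι] [Nonempty ι]
    (hcard : Fintype.card ι = Module.finrank ℝ E')
    (b : ι → E') (hinj : ∀ c : ι → ℝ, (∀ k, ∑ j, c j * ⟪b k, b j⟫ = 0) → c = 0)
    (z : E') (hz : ∀ k, ⟪b k, z⟫ = 0) : z = 0 := by
  have hli : LinearIndependent ℝ b := by
    rw [Fintype.linearIndependent_iff]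
    intro c hc
    have h0 : ∀ k, ∑ j, c j * ⟪b k, b j⟫ = 0 := by
      intro k
      have : ∑ j, c j * ⟪b k, b j⟫ = ⟪b k, ∑ j, c j • b j⟫ := by
        rw [inner_sum]
        simp [real_inner_smul_right]
      rw [this, hc, inner_zero_right]
    intro i
    exact congrFun (hinj c h0) i
  have hsp := hli.span_eq_top_of_card_eq_finrank hcard
  have hzmem : z ∈ Submodule.span ℝ (Set.range b) := by rw [hsp]; trivial
  obtain ⟨c, hc⟩ := (Submodule.mem_span_range_iff_exists_fun ℝ).mp hzmem
  have : ⟪z, z⟫ = 0 := by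
    have h2 : ⟪z, z⟫ = ∑ i, c i * ⟪b i, z⟫ := by
      conv_lhs => rw [← hc]
      rw [sum_inner]
      simp [real_inner_smul_left]
      rw [hc]
    rw [h2]
    simp [hz]
  exact inner_self_eq_zero.mp this

lemma dot_orth_zero {n : ℕ} {ι : Type*} [Fintype ι] [Nonempty ι]
    (hcard : Fintype.card ι = 2 * (n + 1))
    (b : ι → EuclideanSpace ℝ (Fin (n + 1)) × EuclideanSpace ℝ (Fin (n + 1)))
    (hinj : ∀ c : ι → ℝ, (∀ k, ∑ j, c j * dot (b k) (b j) = 0) → c = 0)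
    (z : EuclideanSpace ℝ (Fin (n + 1)) × EuclideanSpace ℝ (Fin (n + 1)))
    (hz : ∀ k, dot (b k) z = 0) : z = 0 := by
  let E := EuclideanSpace ℝ (Fin (n + 1))
  let e := WithLp.equiv 2 (E × E)
  haveI : FiniteDimensional ℝ (WithLp 2 (E × E)) :=
    LinearEquiv.finiteDimensional (WithLp.linearEquiv 2 ℝ (E × E)).symm
  have hrank : Fintype.card ι = Module.finrank ℝ (WithLp 2 (E × E)) := by
    rw [(WithLp.linearEquiv 2 ℝ (E × E)).finrank_eq, Module.finrank_prod,
      finrank_euclideanSpace, Fintype.card_fin, hcard]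
    ring
  have hdot : ∀ p q : E × E, dot p q = ⟪e.symm p, e.symm q⟫ := fun p q => rfl
  have h0 : e.symm z = 0 := by
    refine orth_zero_of_gram_inj hrank (fun k => e.symm (b k)) ?_ _ (fun k => ?_)
    · intro c hc
      exact hinj c (fun k => by simpa [hdot] using hc k)
    · rw [← hdot]; exact hz k
  exact e.symm.injective (by rw [h0]; exact ((WithLp.linearEquiv 2 ℝ (E × E)).symm.map_zero).symm)

lemma pd_zero_of_line_const {n : ℕ} {F : Type*} [NormedAddCommGroup F] [NormedSpace ℝ F]
    (f : EuclideanSpace ℝ (Fin n) → F) (u : EuclideanSpace ℝ (Fin n)) (i : Fin n)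
    (hf : DifferentiableAt ℝ f u)
    (h : ∀ t : ℝ, f (u + t • EuclideanSpace.single i 1) = f u) : pd i f u = 0 := by
  set v := EuclideanSpace.single i (1 : ℝ) with hv
  have hline : HasDerivAt (fun t : ℝ => u + t • v) v 0 := by
    simpa using ((hasDerivAt_id (0 : ℝ)).smul_const v).const_add u
  have hcomp : HasDerivAt (fun t : ℝ => f (u + t • v)) (fderiv ℝ f u v) 0 := by
    have h1 : HasFDerivAt f (fderiv ℝ f u) ((fun t : ℝ => u + t • v) 0) := by
      simpa using hf.hasFDerivAt
    exact h1.comp_hasDerivAt 0 hline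
  have hconst : HasDerivAt (fun t : ℝ => f (u + t • v)) 0 0 := by
    have heq : (fun t : ℝ => f (u + t • v)) = fun _ => f u := funext h
    rw [heq]; exact hasDerivAt_const _ _
  exact hcomp.unique hconst

lemma inner_pd_self_zero {n m : ℕ}
    (f : EuclideanSpace ℝ (Fin n) → EuclideanSpace ℝ (Fin m)) (u : EuclideanSpace ℝ (Fin n))
    (i : Fin n) (hf : DifferentiableAt ℝ f u) (hnorm : ∀ v, ‖f v‖ = 1) :
    ⟪f u, pd i f u⟫ = 0 := by
  have hasF := hf.hasFDerivAt.inner ℝ hf.hasFDerivAt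
  have hconst : HasFDerivAt (fun v => ⟪f v, f v⟫) (0 : EuclideanSpace ℝ (Fin n) →L[ℝ] ℝ) u := by
    have heq : (fun v => ⟪f v, f v⟫) = fun _ => (1 : ℝ) := funext fun v => by
      rw [real_inner_self_eq_norm_mul_norm, hnorm v]; norm_num
    rw [heq]; exact hasFDerivAt_const _ _
  have hu := hasF.unique hconst
  have := congrFun (congrArg (fun (L : EuclideanSpace ℝ (Fin n) →L[ℝ] ℝ) => (L : _ → ℝ))
    hu) (EuclideanSpace.single i 1)
  simp only [ContinuousLinearMap.comp_apply, ContinuousLinearMap.prod_apply,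
    fderivInnerCLM_apply, ContinuousLinearMap.zero_apply] at this
  have h2 : ⟪f u, pd i f u⟫ + ⟪f u, pd i f u⟫ = 0 := by
    rw [pd]
    nth_rewrite 2 [real_inner_comm]
    exact this
  linarith

/-- Lemma 2.2(a), second identity. -/
theorem clifford_torus_JD_decomposition (N : ℕ) (hN : 1 ≤ N)
    (X Y : EuclideanSpace ℝ (Fin (2 * N)) → EuclideanSpace ℝ (Fin (N + 1)))
    (hX : ContDiff ℝ (⊤ : ℕ∞) X) (hY : ContDiff ℝ (⊤ : ℕ∞) Y)
    (hXdep : ∀ u u' : EuclideanSpace ℝ (Fin (2 * N)),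
      (∀ i : Fin (2 * N), (i : ℕ) < N → u i = u' i) → X u = X u')
    (hYdep : ∀ u u' : EuclideanSpace ℝ (Fin (2 * N)),
      (∀ i : Fin (2 * N), N ≤ (i : ℕ) → u i = u' i) → Y u = Y u')
    (hXnorm : ∀ u, ‖X u‖ = 1) (hYnorm : ∀ u, ‖Y u‖ = 1)
    (C D : EuclideanSpace ℝ (Fin (2 * N)) →
      EuclideanSpace ℝ (Fin (N + 1)) × EuclideanSpace ℝ (Fin (N + 1)))
    (hC : C = fun u => ((Real.sqrt 2)⁻¹ • X u, (Real.sqrt 2)⁻¹ • Y u))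
    (hD : D = fun u => ((Real.sqrt 2)⁻¹ • X u, -((Real.sqrt 2)⁻¹ • Y u)))
    (g : EuclideanSpace ℝ (Fin (2 * N)) → Matrix (Fin (2 * N)) (Fin (2 * N)) ℝ)
    (hg : ∀ u i j, g u i j = dot (pd i C u) (pd j C u))
    (w : Fin (2 * N) → EuclideanSpace ℝ (Fin (2 * N)) → ℝ)
    (hw : ∀ j u, w j u = dot (pd j C u) (Jmap (C u)))
    (U : Set (EuclideanSpace ℝ (Fin (2 * N)))) (hUopen : IsOpen U)
    (hginv : ∀ u ∈ U, IsUnit (g u).det) :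
    ∀ u ∈ U,
      -Jmap (D u) = dot (D u) (Jmap (C u)) • C u
        + ∑ i, ∑ j, ((g u)⁻¹ i j * w j u) • pd i D u := by
  intro u hu
  set s : ℝ := (Real.sqrt 2)⁻¹ with hs
  have hs2 : s * s = 2⁻¹ := by
    rw [hs, ← mul_inv]
    rw [Real.mul_self_sqrt (by norm_num : (2:ℝ) ≥ 0)]
  have hXd : DifferentiableAt ℝ X u := (hX.differentiable (by simp)).differentiableAt
  have hYd : DifferentiableAt ℝ Y u := (hY.differentiable (by simp)).differentiableAt
  -- derivatives of C and D
  have hCpd : ∀ i, pd i C u = (s • pd i X u, s • pd i Y u) := by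
    intro i
    have h : HasFDerivAt (fun u => (s • X u, s • Y u)) _ u := HasFDerivAt.prodMk (hXd.hasFDerivAt.const_smul s) (hYd.hasFDerivAt.const_smul s)
    rw [hC]
    show fderiv ℝ _ u _ = _
    rw [h.fderiv]
    rfl
  have hDpd : ∀ i, pd i D u = (s • pd i X u, -(s • pd i Y u)) := by
    intro i
    have h : HasFDerivAt (fun u => (s • X u, -(s • Y u))) _ u := HasFDerivAt.prodMk (hXd.hasFDerivAt.const_smul s) ((hYd.hasFDerivAt.const_smul s)).neg
    rw [hD]
    show fderiv ℝ _ u _ = _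
    rw [h.fderiv]
    rfl
  -- sparsity
  have hYpd0 : ∀ i : Fin (2 * N), (i : ℕ) < N → pd i Y u = 0 := by
    intro i hi
    apply pd_zero_of_line_const Y u i hYd
    intro t
    apply hYdep
    intro j hj
    have hij : j ≠ i := by
      intro hji
      rw [hji] at hj
      omega
    simp [EuclideanSpace.single_apply, hij]
  have hXpd0 : ∀ i : Fin (2 * N), N ≤ (i : ℕ) → pd i X u = 0 := by
    intro i hi
    apply pd_zero_of_line_const X u i hXd
    intro t
    apply hXdep
    intro j hj
    have hij : j ≠ i := by
      intro hji
      rw [hji] at hj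
      omega
    simp [EuclideanSpace.single_apply, hij]
  -- orthogonality
  have hXo : ∀ i, ⟪X u, pd i X u⟫ = 0 := fun i => inner_pd_self_zero X u i hXd hXnorm
  have hYo : ∀ i, ⟪Y u, pd i Y u⟫ = 0 := fun i => inner_pd_self_zero Y u i hYd hYnorm
  have hXo' : ∀ i, ⟪pd i X u, X u⟫ = 0 := fun i => by rw [real_inner_comm]; exact hXo i
  have hYo' : ∀ i, ⟪pd i Y u, Y u⟫ = 0 := fun i => by rw [real_inner_comm]; exact hYo i
  have hxx : ⟪X u, X u⟫ = 1 := by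
    rw [real_inner_self_eq_norm_mul_norm, hXnorm]; norm_num
  have hyy : ⟪Y u, Y u⟫ = 1 := by
    rw [real_inner_self_eq_norm_mul_norm, hYnorm]; norm_num
  have hyx : ⟪Y u, X u⟫ = ⟪X u, Y u⟫ := real_inner_comm _ _
  have hCu : C u = (s • X u, s • Y u) := by rw [hC]
  have hDu : D u = (s • X u, -(s • Y u)) := by rw [hD]
  have hJC : Jmap (C u) = (-(s • Y u), s • X u) := by rw [hCu]; rfl
  have hJD : Jmap (D u) = (s • Y u, s • X u) := by rw [hDu]; simp [Jmap]
  have hdot_pair : ∀ a b c d : EuclideanSpace ℝ (Fin (N + 1)),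
      dot (a, b) (c, d) = ⟪a, c⟫ + ⟪b, d⟫ := fun _ _ _ _ => rfl
  -- dot linearity lemmas
  have hdot_sub : ∀ p q r : EuclideanSpace ℝ (Fin (N+1)) × EuclideanSpace ℝ (Fin (N+1)),
      dot p (q - r) = dot p q - dot p r := by
    intro p q r
    simp only [dot, Prod.fst_sub, Prod.snd_sub, inner_sub_right]
    ring
  have hdot_add : ∀ p q r : EuclideanSpace ℝ (Fin (N+1)) × EuclideanSpace ℝ (Fin (N+1)),
      dot p (q + r) = dot p q + dot p r := by
    intro p q r
    simp only [dot, Prod.fst_add, Prod.snd_add, inner_add_right]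
    ring
  have hdot_neg : ∀ p q : EuclideanSpace ℝ (Fin (N+1)) × EuclideanSpace ℝ (Fin (N+1)),
      dot p (-q) = -dot p q := by
    intro p q
    simp only [dot, Prod.fst_neg, Prod.snd_neg, inner_neg_right]
    ring
  have hdot_smul : ∀ (c : ℝ) (p q : EuclideanSpace ℝ (Fin (N+1)) × EuclideanSpace ℝ (Fin (N+1))),
      dot p (c • q) = c * dot p q := by
    intro c p q
    simp only [dot, Prod.smul_fst, Prod.smul_snd, real_inner_smul_right]
    ring
  have hdot_sum : ∀ (p : EuclideanSpace ℝ (Fin (N+1)) × EuclideanSpace ℝ (Fin (N+1)))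
      (f : Fin (2*N) → EuclideanSpace ℝ (Fin (N+1)) × EuclideanSpace ℝ (Fin (N+1))),
      dot p (∑ i, f i) = ∑ i, dot p (f i) := by
    intro p f
    simp only [dot, Prod.fst_sum, Prod.snd_sum, inner_sum]
    rw [← Finset.sum_add_distrib]
  -- Gram values
  have dCC : dot (C u) (C u) = 1 := by
    rw [hCu, hdot_pair]
    simp only [real_inner_smul_left, real_inner_smul_right, hxx, hyy]
    linear_combination 2 * hs2
  have dCD : dot (C u) (D u) = 0 := by
    rw [hCu, hDu, hdot_pair]
    simp only [real_inner_smul_left, real_inner_smul_right, inner_neg_right, hxx, hyy]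
    ring
  have dDC : dot (D u) (C u) = 0 := by
    rw [hCu, hDu, hdot_pair]
    simp only [real_inner_smul_left, real_inner_smul_right, inner_neg_left, hxx, hyy]
    ring
  have dDD : dot (D u) (D u) = 1 := by
    rw [hDu, hdot_pair]
    simp only [real_inner_smul_left, real_inner_smul_right, inner_neg_left, inner_neg_right,
      hxx, hyy]
    linear_combination 2 * hs2
  have dCpdC : ∀ i, dot (C u) (pd i C u) = 0 := by
    intro i
    rw [hCu, hCpd i, hdot_pair]
    simp only [real_inner_smul_left, real_inner_smul_right, hXo, hYo]
    ring
  have dDpdC : ∀ i, dot (D u) (pd i C u) = 0 := by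
    intro i
    rw [hDu, hCpd i, hdot_pair]
    simp only [real_inner_smul_left, real_inner_smul_right, inner_neg_left, hXo, hYo]
    ring
  have dpdCC : ∀ i, dot (pd i C u) (C u) = 0 := by
    intro i
    rw [hCu, hCpd i, hdot_pair]
    simp only [real_inner_smul_left, real_inner_smul_right, hXo', hYo']
    ring
  have dpdCD : ∀ i, dot (pd i C u) (D u) = 0 := by
    intro i
    rw [hDu, hCpd i, hdot_pair]
    simp only [real_inner_smul_left, real_inner_smul_right, inner_neg_right, hXo', hYo']
    ring
  have dCz : dot (C u) (Jmap (D u)) = ⟪X u, Y u⟫ := by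
    rw [hCu, hJD, hdot_pair]
    simp only [real_inner_smul_left, real_inner_smul_right, hyx]
    linear_combination (2 * ⟪X u, Y u⟫) * hs2
  have dDz : dot (D u) (Jmap (D u)) = 0 := by
    rw [hJD, hDu, hdot_pair]
    simp only [real_inner_smul_left, real_inner_smul_right, inner_neg_left, hyx]
    ring
  have dCpdD : ∀ i, dot (C u) (pd i D u) = 0 := by
    intro i
    rw [hCu, hDpd i, hdot_pair]
    simp only [real_inner_smul_left, real_inner_smul_right, inner_neg_right, hXo, hYo]
    ring
  have dDpdD : ∀ i, dot (D u) (pd i D u) = 0 := by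
    intro i
    rw [hDu, hDpd i, hdot_pair]
    simp only [real_inner_smul_left, real_inner_smul_right, inner_neg_left, inner_neg_right,
      hXo, hYo]
    ring
  have dDJC : dot (D u) (Jmap (C u)) = -⟪X u, Y u⟫ := by
    rw [hDu, hJC, hdot_pair]
    simp only [real_inner_smul_left, real_inner_smul_right, inner_neg_left, inner_neg_right, hyx]
    linear_combination (-2 * ⟪X u, Y u⟫) * hs2
  -- dot (pd k C u) (pd i D u) = ε k * g u k i
  have depsilon : ∀ k i : Fin (2 * N),
      dot (pd k C u) (pd i D u) = (if (k : ℕ) < N then 1 else -1) * g u k i := by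
    intro k i
    rw [hg u k i, hCpd k, hCpd i, hDpd i, hdot_pair, hdot_pair]
    by_cases hk : (k : ℕ) < N
    · rw [if_pos hk]
      have hb : pd k Y u = 0 := hYpd0 k hk
      simp only [hb, real_inner_smul_left, real_inner_smul_right, inner_neg_right, smul_zero,
        inner_zero_left, mul_zero, zero_smul]
      ring
    · rw [if_neg hk]
      have ha : pd k X u = 0 := hXpd0 k (by omega)
      simp only [ha, real_inner_smul_left, real_inner_smul_right, inner_neg_right, smul_zero,
        inner_zero_left, mul_zero, zero_smul]
      ring
  have dpdJD : ∀ k : Fin (2 * N),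
      dot (pd k C u) (Jmap (D u))
        = s * s * (⟪pd k X u, Y u⟫ + ⟪pd k Y u, X u⟫) := by
    intro k
    rw [hCpd k, hJD, hdot_pair]
    simp only [real_inner_smul_left, real_inner_smul_right]
    ring
  have hwval : ∀ k : Fin (2 * N),
      w k u = s * s * (⟪pd k Y u, X u⟫ - ⟪pd k X u, Y u⟫) := by
    intro k
    rw [hw k u, hCpd k, hJC, hdot_pair]
    simp only [real_inner_smul_left, real_inner_smul_right, inner_neg_right]
    ring
  -- the key sum identity
  have hkey : ∀ k : Fin (2 * N),
      ∑ i, (∑ j, (g u)⁻¹ i j * w j u) * g u k i = w k u := by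
    intro k
    have h1 : ∀ i, (∑ j, (g u)⁻¹ i j * w j u) * g u k i
        = ∑ j, g u k i * (g u)⁻¹ i j * w j u := by
      intro i
      rw [Finset.sum_mul]
      apply Finset.sum_congr rfl
      intro j _
      ring
    simp_rw [h1]
    rw [Finset.sum_comm]
    have h2 : ∀ j, ∑ i, g u k i * (g u)⁻¹ i j * w j u
        = (g u * (g u)⁻¹) k j * w j u := by
      intro j
      rw [Matrix.mul_apply, Finset.sum_mul]
    simp_rw [h2]
    rw [Matrix.mul_nonsing_inv _ (hginv u hu)]
    simp [Matrix.one_apply]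
  -- collapse the inner sums in the goal
  have hcollapse : ∀ i, ∑ j, ((g u)⁻¹ i j * w j u) • pd i D u
      = (∑ j, (g u)⁻¹ i j * w j u) • pd i D u := by
    intro i
    rw [Finset.sum_smul]
  rw [← sub_eq_zero]
  simp_rw [hcollapse]
  -- apply the span lemma
  set α : ℝ := dot (D u) (Jmap (C u)) with hα
  set β : Fin (2 * N) → ℝ := fun i => ∑ j, (g u)⁻¹ i j * w j u with hβ
  set z := -Jmap (D u) - (α • C u + ∑ i, β i • pd i D u) with hz
  have hcard : Fintype.card (Option (Option (Fin (2 * N)))) = 2 * (N + 1) := by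
    simp only [Fintype.card_option, Fintype.card_fin]
    omega
  refine dot_orth_zero hcard
    (fun k => Option.elim k (C u) (fun k' => Option.elim k' (D u) (fun i => pd i C u)))
    ?_ z ?_
  · -- Gram injectivity
    intro c hc
    have h0 : c none = 0 := by
      have := hc none
      rw [Fintype.sum_option, Fintype.sum_option] at this
      simpa [dCC, dCD, dCpdC] using this
    have h1 : c (some none) = 0 := by
      have := hc (some none)
      rw [Fintype.sum_option, Fintype.sum_option] at this
      simpa [dDC, dDD, dDpdC] using this
    have h2 : ∀ k : Fin (2 * N), c (some (some k)) = 0 := by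
      have hmv : (g u).mulVec (fun i => c (some (some i))) = 0 := by
        funext k
        have := hc (some (some k))
        rw [Fintype.sum_option, Fintype.sum_option] at this
        simp only [Option.elim] at this
        rw [dpdCC k, dpdCD k] at this
        simp only [Matrix.mulVec, dotProduct, Pi.zero_apply]
        have h3 : ∑ i, c (some (some i)) * dot (pd k C u) (pd i C u) = 0 := by linarith
        rw [← h3]
        apply Finset.sum_congr rfl
        intro i _
        rw [← hg u k i]
        ring
      intro k
      have h4 := congrArg (fun v => (g u)⁻¹.mulVec v) hmv
      simp only [Matrix.mulVec_mulVec, Matrix.nonsing_inv_mul _ (hginv u hu),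
        Matrix.one_mulVec, Matrix.mulVec_zero] at h4
      exact congrFun h4 k
    funext k
    match k with
    | none => exact h0
    | some none => exact h1
    | some (some k) => exact h2 k
  · -- orthogonality of z to the family
    intro k
    have hzdot : ∀ p : EuclideanSpace ℝ (Fin (N+1)) × EuclideanSpace ℝ (Fin (N+1)),
        dot p z = -dot p (Jmap (D u))
          - (α * dot p (C u) + ∑ i, β i * dot p (pd i D u)) := by
      intro p
      rw [hz, hdot_sub, hdot_neg, hdot_add, hdot_smul, hdot_sum]
      simp_rw [hdot_smul]
    match k with
    | none =>
      simp only [Option.elim]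
      rw [hzdot, dCz, dCC]
      simp only [dCpdD, mul_zero, Finset.sum_const_zero, add_zero, mul_one]
      rw [dDJC]
      ring
    | some none =>
      simp only [Option.elim]
      rw [hzdot, dDz, dDC]
      simp only [dDpdD, mul_zero, Finset.sum_const_zero, add_zero]
      ring
    | some (some k) =>
      simp only [Option.elim]
      rw [hzdot, dpdCC k]
      have hsum : ∑ i, β i * dot (pd k C u) (pd i D u)
          = (if (k : ℕ) < N then 1 else -1) * w k u := by
        calc ∑ i, β i * dot (pd k C u) (pd i D u)
            = ∑ i, (if (k : ℕ) < N then (1:ℝ) else -1) * (β i * g u k i) := by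
              apply Finset.sum_congr rfl
              intro i _
              rw [depsilon k i]
              ring
          _ = (if (k : ℕ) < N then 1 else -1) * ∑ i, β i * g u k i := by
              rw [Finset.mul_sum]
          _ = (if (k : ℕ) < N then 1 else -1) * w k u := by
              rw [hβ]
              exact congrArg _ (hkey k)
      rw [hsum, dpdJD k]
      by_cases hk : (k : ℕ) < N
      · rw [if_pos hk]
        have hb : pd k Y u = 0 := hYpd0 k hk
        rw [hwval k, hb]
        simp only [inner_zero_left, mul_zero, add_zero, zero_sub]
        ring
      · rw [if_neg hk]
        have ha : pd k X u = 0 := hXpd0 k (by omega)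
        rw [hwval k, ha]
        simp only [inner_zero_left, mul_zero, zero_add, sub_zero]
        ring
end

section
/- At every point of U the identity Σ_{i,j=1}^{2N} g^{ij} w_j · ∂/∂u_i ( D · JC ) = 0 holds. (Lemma 2.2(d).) -/
open scoped RealInnerProductSpace BigOperators

lemma pd_zero_of_indep' {n : ℕ} {F : Type*} [NormedAddCommGroup F] [NormedSpace ℝ F]
    (f : EuclideanSpace ℝ (Fin n) → F) (i : Fin n) (u : EuclideanSpace ℝ (Fin n))
    (hf : DifferentiableAt ℝ f u)
    (h : ∀ t : ℝ, f (u + t • EuclideanSpace.single i (1:ℝ)) = f u) :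
    fderiv ℝ f u (EuclideanSpace.single i 1) = 0 := by
  set e : EuclideanSpace ℝ (Fin n) := EuclideanSpace.single i (1:ℝ)
  have hline : HasDerivAt (fun t : ℝ => u + t • e) e 0 := by
    simpa using ((hasDerivAt_id (0:ℝ)).smul_const e).const_add u
  have hf' : HasFDerivAt f (fderiv ℝ f u) (u + (0:ℝ) • e) := by simpa using hf.hasFDerivAt
  have hcomp : HasDerivAt (fun t : ℝ => f (u + t • e)) (fderiv ℝ f u e) 0 := by
    have := hf'.comp_hasDerivAt (0:ℝ) hline
    exact this
  have hconst : HasDerivAt (fun _ : ℝ => f u) (0 : F) 0 := hasDerivAt_const 0 _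
  have heq : (fun t : ℝ => f (u + t • e)) = fun _ : ℝ => f u := funext h
  rw [heq] at hcomp
  exact hcomp.unique hconst

lemma aux_span {n : ℕ} {E : Type*} [NormedAddCommGroup E] [InnerProductSpace ℝ E]
    (hfr : Module.finrank ℝ E = n + 1) (A : Fin n → E) (x : E)
    (hx : ⟪x, x⟫ = (1:ℝ)) (hAx : ∀ k, ⟪A k, x⟫ = (0:ℝ))
    (hind : ∀ c : Fin n → ℝ, (∑ k, c k • A k) = 0 → ∀ k, c k = 0)
    {z : E} (hzA : ∀ k, ⟪A k, z⟫ = (0:ℝ)) (hzx : ⟪x, z⟫ = (0:ℝ)) : z = 0 := by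
  set F : Fin (n + 1) → E := Fin.snoc A x with hF
  have hli : LinearIndependent ℝ F := by
    rw [Fintype.linearIndependent_iff]
    intro c hc
    rw [Fin.sum_univ_castSucc] at hc
    simp only [hF, Fin.snoc_castSucc, Fin.snoc_last] at hc
    have hlast : c (Fin.last n) = 0 := by
      have := congrArg (fun v => ⟪x, v⟫) hc
      simp only [inner_sum, inner_add_right, inner_smul_right, inner_zero_right] at this
      have h0 : ∀ k : Fin n, ⟪x, A k⟫ = (0:ℝ) := fun k => by
        rw [real_inner_comm]; exact hAx k
      simp [h0, hx] at this
      exact this.resolve_right (by intro h0'; rw [h0'] at hx; simp at hx)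
    rw [hlast, zero_smul, add_zero] at hc
    have hzero := hind (fun k => c k.castSucc) hc
    intro i
    rcases Fin.eq_castSucc_or_eq_last i with ⟨j, rfl⟩ | rfl
    · exact hzero j
    · exact hlast
  have hspan : Submodule.span ℝ (Set.range F) = ⊤ :=
    hli.span_eq_top_of_card_eq_finrank (by simp [hfr])
  have horth : ∀ v ∈ Submodule.span ℝ (Set.range F), ⟪v, z⟫ = (0:ℝ) := by
    intro v hv
    induction hv using Submodule.span_induction with
    | mem v hv =>
      obtain ⟨i, rfl⟩ := hv
      rcases Fin.eq_castSucc_or_eq_last i with ⟨j, rfl⟩ | rfl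
      · simpa [hF] using hzA j
      · simpa [hF] using hzx
    | zero => simp
    | add a b _ _ ha hb => rw [inner_add_left, ha, hb, add_zero]
    | smul r a _ ha => rw [inner_smul_left, ha]; simp
  have : ⟪z, z⟫ = (0:ℝ) := horth z (hspan ▸ Submodule.mem_top)
  exact inner_self_eq_zero.mp this

/-- Lemma 2.2(d). -/
theorem clifford_torus_w_derivative_identity (N : ℕ) (hN : 1 ≤ N)
    (X Y : EuclideanSpace ℝ (Fin (2 * N)) → EuclideanSpace ℝ (Fin (N + 1)))
    (hX : ContDiff ℝ (⊤ : ℕ∞) X) (hY : ContDiff ℝ (⊤ : ℕ∞) Y)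
    (hXdep : ∀ u u' : EuclideanSpace ℝ (Fin (2 * N)),
      (∀ i : Fin (2 * N), (i : ℕ) < N → u i = u' i) → X u = X u')
    (hYdep : ∀ u u' : EuclideanSpace ℝ (Fin (2 * N)),
      (∀ i : Fin (2 * N), N ≤ (i : ℕ) → u i = u' i) → Y u = Y u')
    (hXnorm : ∀ u, ‖X u‖ = 1) (hYnorm : ∀ u, ‖Y u‖ = 1)
    (C D : EuclideanSpace ℝ (Fin (2 * N)) →
      EuclideanSpace ℝ (Fin (N + 1)) × EuclideanSpace ℝ (Fin (N + 1)))
    (hC : C = fun u => ((Real.sqrt 2)⁻¹ • X u, (Real.sqrt 2)⁻¹ • Y u))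
    (hD : D = fun u => ((Real.sqrt 2)⁻¹ • X u, -((Real.sqrt 2)⁻¹ • Y u)))
    (g : EuclideanSpace ℝ (Fin (2 * N)) → Matrix (Fin (2 * N)) (Fin (2 * N)) ℝ)
    (hg : ∀ u i j, g u i j = dot (pd i C u) (pd j C u))
    (w : Fin (2 * N) → EuclideanSpace ℝ (Fin (2 * N)) → ℝ)
    (hw : ∀ j u, w j u = dot (pd j C u) (Jmap (C u)))
    (U : Set (EuclideanSpace ℝ (Fin (2 * N)))) (hUopen : IsOpen U)
    (hginv : ∀ u ∈ U, IsUnit (g u).det) :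
    ∀ u ∈ U,
      ∑ i, ∑ j, (g u)⁻¹ i j * w j u * pd i (fun v => dot (D v) (Jmap (C v))) u = 0 := by
  intro u hu
  have hXd : Differentiable ℝ X := hX.differentiable (by simp)
  have hYd : Differentiable ℝ Y := hY.differentiable (by simp)
  set c0 : ℝ := (Real.sqrt 2)⁻¹ with hc0
  have hc2 : c0 * c0 = 1 / 2 := by
    rw [hc0, ← mul_inv]
    norm_num [Real.mul_self_sqrt]
  have hsc : ∀ r s : ℝ, c0 * (c0 * r) + c0 * (c0 * s) = (r + s) / 2 := by
    intro r s; rw [← mul_assoc, hc2, ← mul_assoc, hc2]; ring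
  set x := X u with hxdef
  set y := Y u with hydef
  set a : Fin (2 * N) → EuclideanSpace ℝ (Fin (N + 1)) :=
    fun i => fderiv ℝ X u (EuclideanSpace.single i 1) with hadef
  set b : Fin (2 * N) → EuclideanSpace ℝ (Fin (N + 1)) :=
    fun i => fderiv ℝ Y u (EuclideanSpace.single i 1) with hbdef
  -- block vanishing
  have ha0 : ∀ i : Fin (2 * N), N ≤ (i : ℕ) → a i = 0 := by
    intro i hi
    apply pd_zero_of_indep' X i u (hXd u)
    intro t
    apply hXdep
    intro j hj
    have hji : j ≠ i := by
      intro h; rw [h] at hj; omega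
    simp [EuclideanSpace.single_apply, hji]
  have hb0 : ∀ i : Fin (2 * N), (i : ℕ) < N → b i = 0 := by
    intro i hi
    apply pd_zero_of_indep' Y i u (hYd u)
    intro t
    apply hYdep
    intro j hj
    have hji : j ≠ i := by
      intro h; rw [h] at hj; omega
    simp [EuclideanSpace.single_apply, hji]
  -- tangency
  have hax : ∀ i, ⟪a i, x⟫ = (0:ℝ) := by
    intro i
    have hconst : (fun v => ⟪X v, X v⟫) = fun _ : EuclideanSpace ℝ (Fin (2 * N)) => (1:ℝ) := by
      funext v
      rw [real_inner_self_eq_norm_mul_norm, hXnorm v, one_mul]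
    have h1 := fderiv_inner_apply (𝕜 := ℝ) (hXd u) (hXd u) (EuclideanSpace.single i 1)
    rw [hconst] at h1
    simp only [fderiv_fun_const, Pi.zero_apply, ContinuousLinearMap.zero_apply] at h1
    have h2 : ⟪x, a i⟫ = ⟪a i, x⟫ := real_inner_comm _ _
    rw [h2] at h1
    linarith
  have hby : ∀ i, ⟪b i, y⟫ = (0:ℝ) := by
    intro i
    have hconst : (fun v => ⟪Y v, Y v⟫) = fun _ : EuclideanSpace ℝ (Fin (2 * N)) => (1:ℝ) := by
      funext v
      rw [real_inner_self_eq_norm_mul_norm, hYnorm v, one_mul]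
    have h1 := fderiv_inner_apply (𝕜 := ℝ) (hYd u) (hYd u) (EuclideanSpace.single i 1)
    rw [hconst] at h1
    simp only [fderiv_fun_const, Pi.zero_apply, ContinuousLinearMap.zero_apply] at h1
    have h2 : ⟪y, b i⟫ = ⟪b i, y⟫ := real_inner_comm _ _
    rw [h2] at h1
    linarith
  -- derivative of C
  have hpdC : ∀ v, ∀ i, pd i C v = (c0 • fderiv ℝ X v (EuclideanSpace.single i 1),
      c0 • fderiv ℝ Y v (EuclideanSpace.single i 1)) := by
    intro v i
    rw [hC]
    unfold pd
    rw [DifferentiableAt.fderiv_prodMk (f₁ := fun x => c0 • X x) (f₂ := fun x => c0 • Y x) ((hXd v).const_smul c0) ((hYd v).const_smul c0)]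
    rw [ContinuousLinearMap.prod_apply]
    rw [fderiv_fun_const_smul (hXd v) c0, fderiv_fun_const_smul (hYd v) c0]
    rfl
  have hg' : ∀ i j, g u i j = (⟪a i, a j⟫ + ⟪b i, b j⟫) / 2 := by
    intro i j
    rw [hg, hpdC u i, hpdC u j]
    simp only [dot, real_inner_smul_left, real_inner_smul_right]
    exact hsc _ _
  have hJCu : Jmap (C u) = (-(c0 • y), c0 • x) := by
    rw [hC]; rfl
  have hw' : ∀ j, w j u = (⟪b j, x⟫ - ⟪a j, y⟫) / 2 := by
    intro j
    rw [hw, hpdC u j, hJCu]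
    simp only [dot, inner_neg_right, real_inner_smul_left, real_inner_smul_right]
    rw [show -(c0 * (c0 * ⟪a j, y⟫)) + c0 * (c0 * ⟪b j, x⟫)
        = c0 * (c0 * (-⟪a j, y⟫)) + c0 * (c0 * ⟪b j, x⟫) by ring, hsc]
    ring
  -- the function f
  have hf_eq : (fun v => dot (D v) (Jmap (C v)))
      = fun v => -⟪X v, Y v⟫ := by
    funext v
    rw [hD, hC]
    simp only [dot, Jmap, inner_neg_right, inner_neg_left, real_inner_smul_left,
      real_inner_smul_right]
    rw [real_inner_comm (Y v) (X v)]
    linear_combination (-2 * ⟪Y v, X v⟫) * hc2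
  have hpdf : ∀ i, pd i (fun v => dot (D v) (Jmap (C v))) u = -(⟪a i, y⟫ + ⟪x, b i⟫) := by
    intro i
    rw [hf_eq]
    unfold pd
    rw [show (fun v => -⟪X v, Y v⟫) = (fun v => -(fun t => ⟪X t, Y t⟫) v) from rfl]
    rw [fderiv_fun_neg]
    rw [ContinuousLinearMap.neg_apply]
    rw [fderiv_inner_apply (𝕜 := ℝ) (hXd u) (hYd u) (EuclideanSpace.single i 1)]
    have e1 : (fderiv ℝ X u) (EuclideanSpace.single i 1) = a i := rfl
    have e2 : (fderiv ℝ Y u) (EuclideanSpace.single i 1) = b i := rfl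
    have e3 : X u = x := rfl
    have e4 : Y u = y := rfl
    rw [e1, e2, e3, e4]
    ring
  -- ## Linear algebra part
  have hfr : Module.finrank ℝ (EuclideanSpace ℝ (Fin (N + 1))) = N + 1 := by simp
  set G := g u with hGdef
  have hdet := hginv u hu
  have hG1 : G * G⁻¹ = 1 := Matrix.mul_nonsing_inv G hdet
  have hG2 : G⁻¹ * G = 1 := Matrix.nonsing_inv_mul G hdet
  set wv : Fin (2 * N) → ℝ := fun j => w j u with hwv
  set v : Fin (2 * N) → ℝ := G⁻¹.mulVec wv with hvdef
  have hGv : G.mulVec v = wv := by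
    rw [hvdef, Matrix.mulVec_mulVec, hG1, Matrix.one_mulVec]
  have gram : ∀ d : Fin (2 * N) → ℝ, ∀ i, G.mulVec d i
      = (⟪a i, ∑ j, d j • a j⟫ + ⟪b i, ∑ j, d j • b j⟫) / 2 := by
    intro d i
    have h1 : G.mulVec d i = ∑ j, ((⟪a i, a j⟫ + ⟪b i, b j⟫) / 2) * d j := by
      simp [Matrix.mulVec, dotProduct, hg']
    rw [h1, inner_sum, inner_sum]
    simp only [real_inner_smul_right]
    rw [← Finset.sum_add_distrib, Finset.sum_div]
    exact Finset.sum_congr rfl fun j _ => by ring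
  set p := ∑ j, v j • a j with hpdef
  set q := ∑ j, v j • b j with hqdef
  have key : ∀ i, ⟪a i, p + y⟫ + ⟪b i, q - x⟫ = 0 := by
    intro i
    have h1 : G.mulVec v i = wv i := congrFun hGv i
    rw [gram v i] at h1
    have h2 : wv i = (⟪b i, x⟫ - ⟪a i, y⟫) / 2 := hw' i
    rw [h2] at h1
    rw [inner_add_right, inner_sub_right]
    linarith
  have hap : ∀ i, ⟪a i, p + y⟫ = 0 := by
    intro i
    by_cases h : (i : ℕ) < N
    · have hkey := key i
      rw [hb0 i h] at hkey
      simpa using hkey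
    · rw [ha0 i (le_of_not_gt h)]
      simp
  have hbq : ∀ i, ⟪b i, q - x⟫ = 0 := by
    intro i
    by_cases h : (i : ℕ) < N
    · rw [hb0 i h]; simp
    · have hkey := key i
      rw [ha0 i (le_of_not_gt h)] at hkey
      simpa using hkey
  have hxp : ⟪x, p⟫ = 0 := by
    rw [hpdef, inner_sum]
    refine Finset.sum_eq_zero fun j _ => ?_
    rw [real_inner_smul_right, real_inner_comm (a j) x, hax j, mul_zero]
  have hyq : ⟪y, q⟫ = 0 := by
    rw [hqdef, inner_sum]
    refine Finset.sum_eq_zero fun j _ => ?_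
    rw [real_inner_smul_right, real_inner_comm (b j) y, hby j, mul_zero]
  have hxx : ⟪x, x⟫ = (1:ℝ) := by
    rw [real_inner_self_eq_norm_mul_norm]
    rw [show ‖x‖ = 1 from hXnorm u, one_mul]
  have hyy : ⟪y, y⟫ = (1:ℝ) := by
    rw [real_inner_self_eq_norm_mul_norm]
    rw [show ‖y‖ = 1 from hYnorm u, one_mul]
  -- the two families
  set A : Fin N → EuclideanSpace ℝ (Fin (N + 1)) :=
    fun k => a (Fin.castLE (by omega) k) with hAdef
  set B : Fin N → EuclideanSpace ℝ (Fin (N + 1)) :=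
    fun k => b ⟨N + k.1, by have := k.isLt; omega⟩ with hBdef
  have hindA : ∀ c : Fin N → ℝ, (∑ k, c k • A k) = 0 → ∀ k, c k = 0 := by
    intro c hc
    classical
    set d : Fin (2 * N) → ℝ := fun j => if h : (j : ℕ) < N then c ⟨j.1, h⟩ else 0 with hddef
    have hdk : ∀ k : Fin N, d (Fin.castLE (by omega) k) = c k := by
      intro k
      have hk : ((Fin.castLE (by omega : N ≤ 2 * N) k : Fin (2 * N)) : ℕ) < N := k.isLt
      rw [hddef]
      simp only [dif_pos hk]
      exact congrArg c (Fin.ext rfl)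
    have hm : (∑ j, d j • a j) = ∑ k, c k • A k := by
      have step1 : (∑ j, d j • a j)
          = ∑ j ∈ Finset.univ.map ⟨fun k : Fin N => Fin.castLE (by omega) k,
              Fin.castLE_injective (by omega)⟩, d j • a j := by
        symm
        apply Finset.sum_subset (Finset.subset_univ _)
        intro j _ hj
        have hjN : ¬ ((j : ℕ) < N) := by
          intro hlt
          apply hj
          simp only [Finset.mem_map, Finset.mem_univ, Function.Embedding.coeFn_mk]
          exact ⟨⟨(j : ℕ), hlt⟩, trivial, Fin.ext rfl⟩
        rw [hddef]
        simp [hjN]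
      rw [step1, Finset.sum_map]
      simp only [Function.Embedding.coeFn_mk]
      refine Finset.sum_congr rfl fun k _ => ?_
      rw [hdk k]
    have hn : (∑ j, d j • b j) = 0 := Finset.sum_eq_zero fun j _ => by
      by_cases h : (j : ℕ) < N
      · rw [hb0 j h, smul_zero]
      · rw [hddef]; simp [h]
    have hGd : G.mulVec d = 0 := funext fun i => by
      rw [gram d i, hm, hc, hn]
      simp
    have hd0 : d = 0 := by
      have h2 := congrArg (fun z => G⁻¹.mulVec z) hGd
      simpa [Matrix.mulVec_mulVec, hG2, Matrix.one_mulVec, Matrix.mulVec_zero] using h2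
    intro k
    rw [← hdk k, hd0]
    rfl
  have hindB : ∀ c : Fin N → ℝ, (∑ k, c k • B k) = 0 → ∀ k, c k = 0 := by
    intro c hc
    classical
    set d : Fin (2 * N) → ℝ := fun j =>
      if h : N ≤ (j : ℕ) then c ⟨j.1 - N, by have := j.isLt; omega⟩ else 0 with hddef
    have hdk : ∀ k : Fin N, d ⟨N + k.1, by have := k.isLt; omega⟩ = c k := by
      intro k
      have hk : N ≤ ((⟨N + k.1, by have := k.isLt; omega⟩ : Fin (2 * N)) : ℕ) := Nat.le_add_right _ _
      rw [hddef]
      simp only [dif_pos hk]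
      congr 1
      apply Fin.ext
      simp
    have hm : (∑ j, d j • b j) = ∑ k, c k • B k := by
      have step1 : (∑ j, d j • b j)
          = ∑ j ∈ Finset.univ.map ⟨fun k : Fin N => (⟨N + k.1, by have := k.isLt; omega⟩ : Fin (2 * N)),
              by
                intro k1 k2 h
                apply Fin.ext
                have h2 : N + k1.1 = N + k2.1 := congrArg Fin.val h
                omega⟩, d j • b j := by
        symm
        apply Finset.sum_subset (Finset.subset_univ _)
        intro j _ hj
        have hjN : ¬ (N ≤ (j : ℕ)) := by
          intro hle
          apply hj
          simp only [Finset.mem_map, Finset.mem_univ, Function.Embedding.coeFn_mk]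
          exact ⟨⟨(j : ℕ) - N, by have := j.isLt; omega⟩, trivial, Fin.ext (by show N + ((j : ℕ) - N) = (j : ℕ); omega)⟩
        rw [hddef]
        simp [hjN]
      rw [step1, Finset.sum_map]
      show ∑ k : Fin N, d ⟨N + k.1, by have := k.isLt; omega⟩ • b ⟨N + k.1, by have := k.isLt; omega⟩ = _
      refine Finset.sum_congr rfl fun k _ => ?_
      rw [hdk k]
    have hn : (∑ j, d j • a j) = 0 := Finset.sum_eq_zero fun j _ => by
      by_cases h : N ≤ (j : ℕ)
      · rw [ha0 j h, smul_zero]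
      · rw [hddef]; simp [h]
    have hGd : G.mulVec d = 0 := funext fun i => by
      rw [gram d i, hm, hc, hn]
      simp
    have hd0 : d = 0 := by
      have h2 := congrArg (fun z => G⁻¹.mulVec z) hGd
      simpa [Matrix.mulVec_mulVec, hG2, Matrix.one_mulVec, Matrix.mulVec_zero] using h2
    intro k
    rw [← hdk k, hd0]
    rfl
  -- conclude p and q
  have hzp : p + y - ⟪y, x⟫ • x = 0 := by
    apply aux_span hfr A x hxx (fun k => hax _) hindA
    · intro k
      rw [hAdef]
      rw [inner_sub_right, inner_smul_right, hap _, hax _, mul_zero, sub_zero]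
    · rw [inner_sub_right, inner_smul_right, inner_add_right, hxp, hxx, mul_one,
        real_inner_comm y x]
      ring
  have hzq : q - x + ⟪x, y⟫ • y = 0 := by
    apply aux_span hfr B y hyy (fun k => hby _) hindB
    · intro k
      rw [hBdef]
      rw [inner_add_right, inner_smul_right, hbq _, hby _, mul_zero, add_zero]
    · rw [inner_add_right, inner_smul_right, inner_sub_right, hyq, hyy, mul_one,
        real_inner_comm y x]
      ring
  have hpp : p = ⟪y, x⟫ • x - y := by
    rw [← sub_eq_zero, ← hzp]
    abel
  have hqq : q = x - ⟪x, y⟫ • y := by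
    rw [← sub_eq_zero, ← hzq]
    abel
  have hpy : ⟪p, y⟫ = ⟪x, y⟫ * ⟪x, y⟫ - 1 := by
    rw [hpp, inner_sub_left, real_inner_smul_left, real_inner_comm y x, hyy]
  have hxq : ⟪x, q⟫ = 1 - ⟪x, y⟫ * ⟪x, y⟫ := by
    rw [hqq, inner_sub_right, real_inner_smul_right, hxx]
  -- final computation
  have hsum1 : ∀ i, (∑ j, G⁻¹ i j * w j u * pd i (fun v => dot (D v) (Jmap (C v))) u)
      = v i * (-(⟪a i, y⟫ + ⟪x, b i⟫)) := by
    intro i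
    rw [← Finset.sum_mul]
    have hv : (∑ j, G⁻¹ i j * w j u) = v i := by
      rw [hvdef]
      simp [Matrix.mulVec, dotProduct, hwv]
    rw [hv, hpdf i]
  have e5 : ⟪p, y⟫ = ∑ i, v i * ⟪a i, y⟫ := by
    rw [hpdef, sum_inner]
    exact Finset.sum_congr rfl fun i _ => real_inner_smul_left _ _ _
  have e6 : ⟪x, q⟫ = ∑ i, v i * ⟪x, b i⟫ := by
    rw [hqdef, inner_sum]
    exact Finset.sum_congr rfl fun i _ => real_inner_smul_right _ _ _
  calc ∑ i, ∑ j, G⁻¹ i j * w j u * pd i (fun v => dot (D v) (Jmap (C v))) u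
      = ∑ i, v i * (-(⟪a i, y⟫ + ⟪x, b i⟫)) := Finset.sum_congr rfl fun i _ => hsum1 i
    _ = -(⟪p, y⟫ + ⟪x, q⟫) := by
        rw [e5, e6, ← Finset.sum_add_distrib, ← Finset.sum_neg_distrib]
        exact Finset.sum_congr rfl fun i _ => by ring
    _ = 0 := by
        rw [hpy, hxq]
        ring
end

section
/- At every point of U the vector identity Σ_{i,j=1}^{2N} g^{ij} · ∂(D · JC)/∂u_i · ∂C/∂u_j = −2 ( JD + (D · JC) C ) holds in ℝ^{2N+2}. (Lemma 2.2(e).) -/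
open scoped RealInnerProductSpace BigOperators

lemma pd_eq_zero_of_indep {n : ℕ} {F : Type*} [NormedAddCommGroup F] [NormedSpace ℝ F]
    {f : EuclideanSpace ℝ (Fin n) → F} (hf : Differentiable ℝ f)
    {S : Set (Fin n)} (hdep : ∀ u u', (∀ j ∈ S, u j = u' j) → f u = f u')
    {i : Fin n} (hi : i ∉ S) (u : EuclideanSpace ℝ (Fin n)) : pd i f u = 0 := by
  set e : EuclideanSpace ℝ (Fin n) := EuclideanSpace.single i 1 with he
  have hcurve : ∀ t : ℝ, f (u + t • e) = f u := by
    intro t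
    apply hdep
    intro j hj
    have hji : j ≠ i := fun h => hi (h ▸ hj)
    simp [he, PiLp.add_apply, PiLp.smul_apply, EuclideanSpace.single_apply, hji]
  have h1 : HasDerivAt (fun t : ℝ => u + t • e) e 0 := by
    simpa using ((hasDerivAt_id (0:ℝ)).smul_const e).const_add u
  have h2 : HasDerivAt (fun t : ℝ => f (u + t • e)) (fderiv ℝ f u e) 0 := by
    have := (hf (u + (0:ℝ) • e)).hasFDerivAt.comp_hasDerivAt 0 h1
    simpa [Function.comp_def] using this
  have h3 : HasDerivAt (fun t : ℝ => f (u + t • e)) 0 0 := by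
    have : (fun t : ℝ => f (u + t • e)) = fun _ => f u := funext hcurve
    rw [this]; exact hasDerivAt_const _ _
  show fderiv ℝ f u e = 0
  exact h2.unique h3

def emb1 (N : ℕ) (k : Fin N) : Fin (2 * N) := ⟨k, by omega⟩
def emb2 (N : ℕ) (k : Fin N) : Fin (2 * N) := ⟨N + k, by omega⟩

lemma sum_split {N : ℕ} {M : Type*} [AddCommMonoid M] (f : Fin (2 * N) → M) :
    ∑ j, f j = ∑ k : Fin N, f (emb1 N k) + ∑ k : Fin N, f (emb2 N k) := by
  have h2 : ∑ x : Fin N ⊕ Fin N, f (Sum.elim (emb1 N) (emb2 N) x)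
      = ∑ k : Fin N, f (emb1 N k) + ∑ k : Fin N, f (emb2 N k) := by
    rw [Fintype.sum_sum_type]
    rfl
  rw [← h2]
  apply (Fintype.sum_bijective (Sum.elim (emb1 N) (emb2 N)) ?_ _ _ ?_).symm
  · constructor
    · rintro (a | a) (b | b) h <;>
        simp only [Sum.elim_inl, Sum.elim_inr, emb1, emb2, Fin.mk.injEq] at h <;>
        first
          | (congr 1; exact Fin.ext (by omega))
          | (exfalso; omega)
    · intro j
      rcases lt_or_ge (j : ℕ) N with h | h
      · exact ⟨Sum.inl ⟨j, h⟩, Fin.ext rfl⟩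
      · exact ⟨Sum.inr ⟨(j : ℕ) - N, by omega⟩, Fin.ext (by simp [emb2]; omega)⟩
  · intro x; rfl

/-- Lemma 2.2(e). -/
theorem clifford_torus_gradient_identity (N : ℕ) (hN : 1 ≤ N)
    (X Y : EuclideanSpace ℝ (Fin (2 * N)) → EuclideanSpace ℝ (Fin (N + 1)))
    (hX : ContDiff ℝ (⊤ : ℕ∞) X) (hY : ContDiff ℝ (⊤ : ℕ∞) Y)
    (hXdep : ∀ u u' : EuclideanSpace ℝ (Fin (2 * N)),
      (∀ i : Fin (2 * N), (i : ℕ) < N → u i = u' i) → X u = X u')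
    (hYdep : ∀ u u' : EuclideanSpace ℝ (Fin (2 * N)),
      (∀ i : Fin (2 * N), N ≤ (i : ℕ) → u i = u' i) → Y u = Y u')
    (hXnorm : ∀ u, ‖X u‖ = 1) (hYnorm : ∀ u, ‖Y u‖ = 1)
    (C D : EuclideanSpace ℝ (Fin (2 * N)) →
      EuclideanSpace ℝ (Fin (N + 1)) × EuclideanSpace ℝ (Fin (N + 1)))
    (hC : C = fun u => ((Real.sqrt 2)⁻¹ • X u, (Real.sqrt 2)⁻¹ • Y u))
    (hD : D = fun u => ((Real.sqrt 2)⁻¹ • X u, -((Real.sqrt 2)⁻¹ • Y u)))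
    (g : EuclideanSpace ℝ (Fin (2 * N)) → Matrix (Fin (2 * N)) (Fin (2 * N)) ℝ)
    (hg : ∀ u i j, g u i j = dot (pd i C u) (pd j C u))
    (w : Fin (2 * N) → EuclideanSpace ℝ (Fin (2 * N)) → ℝ)
    (hw : ∀ j u, w j u = dot (pd j C u) (Jmap (C u)))
    (U : Set (EuclideanSpace ℝ (Fin (2 * N)))) (hUopen : IsOpen U)
    (hginv : ∀ u ∈ U, IsUnit (g u).det) :
    ∀ u ∈ U,
      ∑ i, ∑ j, ((g u)⁻¹ i j * pd i (fun v => dot (D v) (Jmap (C v))) u) • pd j C u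
        = (-2 : ℝ) • (Jmap (D u) + dot (D u) (Jmap (C u)) • C u) := by
  intro u hu
  have hXd : Differentiable ℝ X := hX.differentiable (by simp)
  have hYd : Differentiable ℝ Y := hY.differentiable (by simp)
  set s : ℝ := (Real.sqrt 2)⁻¹ with hs
  have hs2 : s * s = 1 / 2 := by
    rw [hs, ← mul_inv, Real.mul_self_sqrt (by norm_num : (0:ℝ) ≤ 2)]
    norm_num
  -- derivatives vanish in independent directions
  have hvX0 : ∀ i : Fin (2 * N), N ≤ (i : ℕ) → pd i X u = 0 := by
    intro i hi
    exact pd_eq_zero_of_indep hXd (S := {j : Fin (2*N) | (j : ℕ) < N})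
      (fun a b h => hXdep a b h) (by simp; omega) u
  have hvY0 : ∀ i : Fin (2 * N), (i : ℕ) < N → pd i Y u = 0 := by
    intro i hi
    exact pd_eq_zero_of_indep hYd (S := {j : Fin (2*N) | N ≤ (j : ℕ)})
      (fun a b h => hYdep a b h) (by simp; omega) u
  -- derivative of C
  have hCpd : ∀ i : Fin (2 * N), ∀ v, pd i C v = (s • pd i X v, s • pd i Y v) := by
    intro i v
    have hF : HasFDerivAt C (((s • fderiv ℝ X v).prod (s • fderiv ℝ Y v))) v := by
      rw [hC]
      exact ((hXd v).hasFDerivAt.const_smul s).prodMk ((hYd v).hasFDerivAt.const_smul s)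
    show fderiv ℝ C v _ = _
    rw [hF.fderiv]
    rfl
  -- the function D · JC equals -⟪X, Y⟫
  have hfun : (fun v => dot (D v) (Jmap (C v))) = fun v => -⟪X v, Y v⟫ := by
    funext v
    rw [hC, hD]
    simp only [dot, Jmap, real_inner_smul_left, real_inner_smul_right, inner_neg_left,
      inner_neg_right, real_inner_comm (Y v) (X v)]
    linear_combination (-2 * (⟪Y v, X v⟫ : ℝ)) * hs2
  -- partial derivatives of that function
  have hfpd : ∀ i : Fin (2 * N),
      pd i (fun v => dot (D v) (Jmap (C v))) u
        = -(⟪pd i X u, Y u⟫ + ⟪X u, pd i Y u⟫) := by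
    intro i
    rw [hfun]
    show fderiv ℝ (fun v => -⟪X v, Y v⟫) u _ = _
    rw [fderiv_fun_neg, ContinuousLinearMap.neg_apply,
      fderiv_inner_apply ℝ (hXd u) (hYd u)]
    show -(⟪X u, pd i Y u⟫ + ⟪pd i X u, Y u⟫) = _
    ring
  -- orthogonality
  have horthX : ∀ i : Fin (2 * N), ⟪pd i X u, X u⟫ = 0 := by
    intro i
    have hconst : (fun v => ⟪X v, X v⟫) = fun _ => (1 : ℝ) := by
      funext v
      rw [real_inner_self_eq_norm_mul_norm, hXnorm v]; norm_num
    have h0 : fderiv ℝ (fun v => ⟪X v, X v⟫) u (EuclideanSpace.single i 1) = 0 := by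
      rw [hconst]; simp
    rw [fderiv_inner_apply ℝ (hXd u) (hXd u)] at h0
    have h0' : ⟪X u, pd i X u⟫ + ⟪pd i X u, X u⟫ = 0 := h0
    have hc : ⟪pd i X u, X u⟫ = ⟪X u, pd i X u⟫ := real_inner_comm _ _
    linarith
  have horthY : ∀ i : Fin (2 * N), ⟪pd i Y u, Y u⟫ = 0 := by
    intro i
    have hconst : (fun v => ⟪Y v, Y v⟫) = fun _ => (1 : ℝ) := by
      funext v
      rw [real_inner_self_eq_norm_mul_norm, hYnorm v]; norm_num
    have h0 : fderiv ℝ (fun v => ⟪Y v, Y v⟫) u (EuclideanSpace.single i 1) = 0 := by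
      rw [hconst]; simp
    rw [fderiv_inner_apply ℝ (hYd u) (hYd u)] at h0
    have h0' : ⟪Y u, pd i Y u⟫ + ⟪pd i Y u, Y u⟫ = 0 := h0
    have hc : ⟪pd i Y u, Y u⟫ = ⟪Y u, pd i Y u⟫ := real_inner_comm _ _
    linarith
  -- value of g
  have hgval : ∀ i j : Fin (2 * N),
      g u i j = s * s * (⟪pd i X u, pd j X u⟫ + ⟪pd i Y u, pd j Y u⟫) := by
    intro i j
    rw [hg, hCpd i u, hCpd j u]
    simp only [dot, real_inner_smul_left, real_inner_smul_right]
    ring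
  -- Gram matrix kernel argument
  have hker : ∀ t : Fin (2 * N) → ℝ, (∑ j, t j • pd j C u) = 0 → ∀ j, t j = 0 := by
    intro t ht
    have hm : ∀ i, (g u).mulVec t i = 0 := by
      intro i
      show ∑ j, g u i j * t j = 0
      have hexp : ∑ j, g u i j * t j
          = ⟪(pd i C u).1, (∑ j, t j • pd j C u).1⟫
            + ⟪(pd i C u).2, (∑ j, t j • pd j C u).2⟫ := by
        rw [Prod.fst_sum, Prod.snd_sum, inner_sum, inner_sum, ← Finset.sum_add_distrib]
        apply Finset.sum_congr rfl
        intro j _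
        rw [hg]
        simp only [Prod.smul_fst, Prod.smul_snd, real_inner_smul_right, dot]
        ring
      rw [hexp, ht]
      simp
    have htv : (g u).mulVec t = 0 := funext hm
    have h2 : t = ((g u)⁻¹ * (g u)).mulVec t := by
      rw [Matrix.nonsing_inv_mul _ (hginv u hu), Matrix.one_mulVec]
    have ht0 : t = 0 := by
      rw [h2, ← Matrix.mulVec_mulVec, htv, Matrix.mulVec_zero]
    intro j
    rw [ht0]
    rfl
  -- linear independence of the two blocks
  have hlinX : LinearIndependent ℝ (fun k : Fin N => pd (emb1 N k) X u) := by
    rw [Fintype.linearIndependent_iff]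
    intro t ht
    set t' : Fin (2 * N) → ℝ := fun j => if h : (j : ℕ) < N then t ⟨j, h⟩ else 0 with ht'
    have hts : ∀ k : Fin N, t' (emb1 N k) = t k := by
      intro k; simp [ht', emb1]
    have htz : ∀ k : Fin N, t' (emb2 N k) = 0 := by
      intro k; simp [ht', emb2]
    have hsum : ∑ j, t' j • pd j C u = 0 := by
      have h1 : (∑ j, t' j • pd j C u).1 = 0 := by
        rw [Prod.fst_sum]
        have : ∀ j, (t' j • pd j C u).1 = t' j • (s • pd j X u) := by
          intro j; rw [hCpd]; rfl
        rw [Finset.sum_congr rfl (fun j _ => this j), sum_split]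
        have e2 : ∑ k : Fin N, t' (emb2 N k) • (s • pd (emb2 N k) X u) = 0 := by
          apply Finset.sum_eq_zero; intro k _; rw [htz]; simp
        rw [e2, add_zero]
        have e1 : ∀ k : Fin N, t' (emb1 N k) • (s • pd (emb1 N k) X u)
            = s • (t k • pd (emb1 N k) X u) := by
          intro k; rw [hts, smul_comm]
        rw [Finset.sum_congr rfl (fun k _ => e1 k), ← Finset.smul_sum, ht, smul_zero]
      have h2 : (∑ j, t' j • pd j C u).2 = 0 := by
        rw [Prod.snd_sum]
        apply Finset.sum_eq_zero
        intro j _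
        rcases lt_or_ge (j : ℕ) N with h | h
        · have : (t' j • pd j C u).2 = t' j • (s • pd j Y u) := by rw [hCpd]; rfl
          rw [this, hvY0 j h]; simp
        · have hz : t' j = 0 := by simp [ht']; omega
          rw [hz]; simp
      exact Prod.ext h1 h2
    intro k
    rw [← hts k]
    exact hker t' hsum (emb1 N k)
  have hlinY : LinearIndependent ℝ (fun k : Fin N => pd (emb2 N k) Y u) := by
    rw [Fintype.linearIndependent_iff]
    intro t ht
    set t' : Fin (2 * N) → ℝ := fun j => if h : N ≤ (j : ℕ) then t ⟨(j : ℕ) - N, by have := j.isLt; omega⟩ else 0 with ht'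
    have hts : ∀ k : Fin N, t' (emb2 N k) = t k := by
      intro k
      have h1 : N ≤ ((emb2 N k : Fin (2*N)) : ℕ) := by
        show N ≤ N + (k : ℕ); omega
      simp only [ht']
      rw [dif_pos h1]
      congr 1
      apply Fin.ext
      show N + (k : ℕ) - N = (k : ℕ)
      omega
    have htz : ∀ k : Fin N, t' (emb1 N k) = 0 := by
      intro k
      have h1 : ¬ N ≤ ((emb1 N k : Fin (2*N)) : ℕ) := by
        show ¬ N ≤ (k : ℕ); have := k.isLt; omega
      simp only [ht']
      rw [dif_neg h1]
    have hsum : ∑ j, t' j • pd j C u = 0 := by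
      have h1 : (∑ j, t' j • pd j C u).1 = 0 := by
        rw [Prod.fst_sum]
        apply Finset.sum_eq_zero
        intro j _
        rcases lt_or_ge (j : ℕ) N with h | h
        · have hz : t' j = 0 := by simp [ht']; omega
          rw [hz]; simp
        · have : (t' j • pd j C u).1 = t' j • (s • pd j X u) := by rw [hCpd]; rfl
          rw [this, hvX0 j h]; simp
      have h2 : (∑ j, t' j • pd j C u).2 = 0 := by
        rw [Prod.snd_sum]
        have : ∀ j, (t' j • pd j C u).2 = t' j • (s • pd j Y u) := by
          intro j; rw [hCpd]; rfl
        rw [Finset.sum_congr rfl (fun j _ => this j), sum_split]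
        have e2 : ∑ k : Fin N, t' (emb1 N k) • (s • pd (emb1 N k) Y u) = 0 := by
          apply Finset.sum_eq_zero; intro k _; rw [htz]; simp
        rw [e2]
        have e1 : ∀ k : Fin N, t' (emb2 N k) • (s • pd (emb2 N k) Y u)
            = s • (t k • pd (emb2 N k) Y u) := by
          intro k; rw [hts, smul_comm]
        rw [Finset.sum_congr rfl (fun k _ => e1 k), ← Finset.smul_sum, ht, smul_zero, zero_add]
      exact Prod.ext h1 h2
    intro k
    rw [← hts k]
    exact hker t' hsum (emb2 N k)
  -- span arguments
  have hXne : X u ≠ 0 := by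
    intro h
    have := hXnorm u
    rw [h] at this
    simp at this
  have hYne : Y u ≠ 0 := by
    intro h
    have := hYnorm u
    rw [h] at this
    simp at this
  have hXX : ⟪X u, X u⟫ = (1:ℝ) := by
    rw [real_inner_self_eq_norm_mul_norm, hXnorm u]; norm_num
  have hYY : ⟪Y u, Y u⟫ = (1:ℝ) := by
    rw [real_inner_self_eq_norm_mul_norm, hYnorm u]; norm_num
  have hspanX : Submodule.span ℝ (Set.range fun k : Fin N => pd (emb1 N k) X u)
      = (ℝ ∙ (X u))ᗮ := by
    apply Submodule.eq_of_le_of_finrank_eq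
    · rw [Submodule.span_le]
      rintro _ ⟨k, rfl⟩
      rw [SetLike.mem_coe, Submodule.mem_orthogonal_singleton_iff_inner_right]
      rw [real_inner_comm]
      exact horthX _
    · rw [finrank_span_eq_card hlinX, Fintype.card_fin]
      have h1 : Module.finrank ℝ (ℝ ∙ (X u)) + Module.finrank ℝ (ℝ ∙ (X u))ᗮ
          = Module.finrank ℝ (EuclideanSpace ℝ (Fin (N + 1))) :=
        Submodule.finrank_add_finrank_orthogonal _
      rw [finrank_span_singleton hXne, finrank_euclideanSpace, Fintype.card_fin] at h1
      omega
  have hspanY : Submodule.span ℝ (Set.range fun k : Fin N => pd (emb2 N k) Y u)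
      = (ℝ ∙ (Y u))ᗮ := by
    apply Submodule.eq_of_le_of_finrank_eq
    · rw [Submodule.span_le]
      rintro _ ⟨k, rfl⟩
      rw [SetLike.mem_coe, Submodule.mem_orthogonal_singleton_iff_inner_right]
      rw [real_inner_comm]
      exact horthY _
    · rw [finrank_span_eq_card hlinY, Fintype.card_fin]
      have h1 : Module.finrank ℝ (ℝ ∙ (Y u)) + Module.finrank ℝ (ℝ ∙ (Y u))ᗮ
          = Module.finrank ℝ (EuclideanSpace ℝ (Fin (N + 1))) :=
        Submodule.finrank_add_finrank_orthogonal _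
      rw [finrank_span_singleton hYne, finrank_euclideanSpace, Fintype.card_fin] at h1
      omega
  obtain ⟨cX, hcX⟩ : ∃ c : Fin N → ℝ,
      ∑ k, c k • pd (emb1 N k) X u = Y u - ⟪X u, Y u⟫ • X u := by
    rw [← Submodule.mem_span_range_iff_exists_fun ℝ, hspanX,
      Submodule.mem_orthogonal_singleton_iff_inner_right]
    rw [inner_sub_right, real_inner_smul_right, hXX]
    ring
  obtain ⟨cY, hcY⟩ : ∃ c : Fin N → ℝ,
      ∑ k, c k • pd (emb2 N k) Y u = X u - ⟪X u, Y u⟫ • Y u := by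
    rw [← Submodule.mem_span_range_iff_exists_fun ℝ, hspanY,
      Submodule.mem_orthogonal_singleton_iff_inner_right]
    rw [inner_sub_right, real_inner_smul_right, hYY, real_inner_comm]
    ring
  -- the coefficient vector
  set cc : Fin (2 * N) → ℝ := fun j =>
    if h : (j : ℕ) < N then -2 * cX ⟨j, h⟩
    else -2 * cY ⟨(j : ℕ) - N, by have := j.isLt; omega⟩ with hcc
  have hcc1 : ∀ k : Fin N, cc (emb1 N k) = -2 * cX k := by
    intro k
    have h1 : ((emb1 N k : Fin (2*N)) : ℕ) < N := k.isLt
    simp only [hcc]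
    rw [dif_pos h1]
    congr 2
  have hcc2 : ∀ k : Fin N, cc (emb2 N k) = -2 * cY k := by
    intro k
    have h1 : ¬ ((emb2 N k : Fin (2*N)) : ℕ) < N := by
      show ¬ N + (k : ℕ) < N; omega
    simp only [hcc]
    rw [dif_neg h1]
    congr 2
    apply Fin.ext
    show N + (k : ℕ) - N = (k : ℕ)
    omega
  have hSX : ∑ j, cc j • pd j X u = (-2 : ℝ) • (Y u - ⟪X u, Y u⟫ • X u) := by
    rw [sum_split]
    have h2 : ∑ k : Fin N, cc (emb2 N k) • pd (emb2 N k) X u = 0 := by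
      apply Finset.sum_eq_zero; intro k _; rw [hvX0 _ (by simp [emb2])]; simp
    rw [h2, add_zero]
    have e1 : ∀ k : Fin N, cc (emb1 N k) • pd (emb1 N k) X u
        = (-2 : ℝ) • (cX k • pd (emb1 N k) X u) := by
      intro k; rw [hcc1, smul_smul]
    rw [Finset.sum_congr rfl (fun k _ => e1 k), ← Finset.smul_sum, hcX]
  have hSY : ∑ j, cc j • pd j Y u = (-2 : ℝ) • (X u - ⟪X u, Y u⟫ • Y u) := by
    rw [sum_split]
    have h2 : ∑ k : Fin N, cc (emb1 N k) • pd (emb1 N k) Y u = 0 := by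
      apply Finset.sum_eq_zero; intro k _; rw [hvY0 _ (by simp [emb1])]; simp
    rw [h2, zero_add]
    have e1 : ∀ k : Fin N, cc (emb2 N k) • pd (emb2 N k) Y u
        = (-2 : ℝ) • (cY k • pd (emb2 N k) Y u) := by
      intro k; rw [hcc2, smul_smul]
    rw [Finset.sum_congr rfl (fun k _ => e1 k), ← Finset.smul_sum, hcY]
  -- the key relation f_i = ∑_k g_{ik} c_k
  have hfc : ∀ i : Fin (2 * N),
      pd i (fun v => dot (D v) (Jmap (C v))) u = ∑ k, g u i k * cc k := by
    intro i
    rw [hfpd i]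
    rcases lt_or_ge (i : ℕ) N with h | h
    · have hY0 : pd i Y u = 0 := hvY0 i h
      have hr : ∑ k, g u i k * cc k = (s * s) * ⟪pd i X u, ∑ k, cc k • pd k X u⟫ := by
        have hi : ⟪pd i X u, ∑ k, cc k • pd k X u⟫
            = ∑ k, cc k * ⟪pd i X u, pd k X u⟫ := by
          rw [inner_sum]
          exact Finset.sum_congr rfl fun k _ => real_inner_smul_right _ _ _
        rw [hi, Finset.mul_sum]
        apply Finset.sum_congr rfl
        intro k _
        rw [hgval i k, hY0, inner_zero_left]
        ring
      rw [hr, hSX, real_inner_smul_right, inner_sub_right, real_inner_smul_right,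
        horthX i, hY0, inner_zero_right]
      linear_combination (2 * (⟪pd i X u, Y u⟫ : ℝ)) * hs2
    · have hX0 : pd i X u = 0 := hvX0 i h
      have hr : ∑ k, g u i k * cc k = (s * s) * ⟪pd i Y u, ∑ k, cc k • pd k Y u⟫ := by
        have hi : ⟪pd i Y u, ∑ k, cc k • pd k Y u⟫
            = ∑ k, cc k * ⟪pd i Y u, pd k Y u⟫ := by
          rw [inner_sum]
          exact Finset.sum_congr rfl fun k _ => real_inner_smul_right _ _ _
        rw [hi, Finset.mul_sum]
        apply Finset.sum_congr rfl
        intro k _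
        rw [hgval i k, hX0, inner_zero_left]
        ring
      rw [hr, hSY, real_inner_smul_right, inner_sub_right, real_inner_smul_right,
        horthY i, hX0, inner_zero_left, real_inner_comm (X u) (pd i Y u)]
      have hc : ⟪X u, pd i Y u⟫ = ⟪pd i Y u, X u⟫ := real_inner_comm _ _
      linear_combination (2 * (⟪pd i Y u, X u⟫ : ℝ)) * hs2 + (2 * (s * s) - 1) * hc
  -- value of the right-hand side
  have hduj : dot (D u) (Jmap (C u)) = -⟪X u, Y u⟫ := congrFun hfun u
  have hsum2 : ∑ j, cc j • pd j C u
      = (-2 : ℝ) • (Jmap (D u) + dot (D u) (Jmap (C u)) • C u) := by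
    have h1 : (∑ j, cc j • pd j C u).1 = s • ((-2 : ℝ) • (Y u - ⟪X u, Y u⟫ • X u)) := by
      rw [Prod.fst_sum]
      have : ∀ j, (cc j • pd j C u).1 = s • (cc j • pd j X u) := by
        intro j; rw [hCpd]; show cc j • (s • pd j X u) = _; rw [smul_comm]
      rw [Finset.sum_congr rfl (fun j _ => this j), ← Finset.smul_sum, hSX]
    have h2 : (∑ j, cc j • pd j C u).2 = s • ((-2 : ℝ) • (X u - ⟪X u, Y u⟫ • Y u)) := by
      rw [Prod.snd_sum]
      have : ∀ j, (cc j • pd j C u).2 = s • (cc j • pd j Y u) := by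
        intro j; rw [hCpd]; show cc j • (s • pd j Y u) = _; rw [smul_comm]
      rw [Finset.sum_congr rfl (fun j _ => this j), ← Finset.smul_sum, hSY]
    have hr1 : ((-2 : ℝ) • (Jmap (D u) + dot (D u) (Jmap (C u)) • C u)).1
        = s • ((-2 : ℝ) • (Y u - ⟪X u, Y u⟫ • X u)) := by
      rw [hduj, hC, hD]
      show (-2 : ℝ) • (-(-(s • Y u)) + (-⟪X u, Y u⟫) • (s • X u)) = _
      module
    have hr2 : ((-2 : ℝ) • (Jmap (D u) + dot (D u) (Jmap (C u)) • C u)).2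
        = s • ((-2 : ℝ) • (X u - ⟪X u, Y u⟫ • Y u)) := by
      rw [hduj, hC, hD]
      show (-2 : ℝ) • (s • X u + (-⟪X u, Y u⟫) • (s • Y u)) = _
      module
    apply Prod.ext
    · rw [h1, hr1]
    · rw [h2, hr2]
  -- symmetry of g and its inverse
  have hgsymm : ∀ i j, g u i j = g u j i := by
    intro i j
    rw [hg, hg]
    simp only [dot]
    rw [real_inner_comm, real_inner_comm ((pd i C u).2)]
  have hinvsymm : ∀ i j, (g u)⁻¹ i j = (g u)⁻¹ j i := by
    intro i j
    have hT : Matrix.transpose (g u) = g u := Matrix.ext fun a b => by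
      rw [Matrix.transpose_apply]; exact hgsymm b a
    have h1 : Matrix.transpose ((g u)⁻¹) = (g u)⁻¹ := by
      rw [Matrix.transpose_nonsing_inv, hT]
    calc (g u)⁻¹ i j = Matrix.transpose ((g u)⁻¹) j i := by rw [Matrix.transpose_apply]
      _ = (g u)⁻¹ j i := by rw [h1]
  -- final computation
  have hlhs : ∀ j : Fin (2 * N),
      ∑ i, (g u)⁻¹ i j * pd i (fun v => dot (D v) (Jmap (C v))) u = cc j := by
    intro j
    calc ∑ i, (g u)⁻¹ i j * pd i (fun v => dot (D v) (Jmap (C v))) u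
        = ∑ i, ∑ k, (g u)⁻¹ j i * (g u i k * cc k) := by
          apply Finset.sum_congr rfl
          intro i _
          rw [hfc i, hinvsymm i j, Finset.mul_sum]
      _ = ∑ k, (∑ i, (g u)⁻¹ j i * g u i k) * cc k := by
          rw [Finset.sum_comm]
          apply Finset.sum_congr rfl
          intro k _
          rw [Finset.sum_mul]
          apply Finset.sum_congr rfl
          intro i _
          ring
      _ = ∑ k, ((g u)⁻¹ * g u) j k * cc k := by
          apply Finset.sum_congr rfl
          intro k _
          rw [Matrix.mul_apply]
      _ = ∑ k, (1 : Matrix (Fin (2*N)) (Fin (2*N)) ℝ) j k * cc k := by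
          rw [Matrix.nonsing_inv_mul _ (hginv u hu)]
      _ = cc j := by
          simp [Matrix.one_apply]
  calc ∑ i, ∑ j, ((g u)⁻¹ i j * pd i (fun v => dot (D v) (Jmap (C v))) u) • pd j C u
      = ∑ j, ∑ i, ((g u)⁻¹ i j * pd i (fun v => dot (D v) (Jmap (C v))) u) • pd j C u := by
        rw [Finset.sum_comm]
    _ = ∑ j, (∑ i, (g u)⁻¹ i j * pd i (fun v => dot (D v) (Jmap (C v))) u) • pd j C u := by
        apply Finset.sum_congr rfl
        intro j _
        rw [Finset.sum_smul]
    _ = ∑ j, cc j • pd j C u := by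
        apply Finset.sum_congr rfl
        intro j _
        rw [hlhs j]
    _ = (-2 : ℝ) • (Jmap (D u) + dot (D u) (Jmap (C u)) • C u) := hsum2
end

section
/- On the open subset of ℝ^{2N} where x_1^2 − y_1^2 + ⋯ + x_N^2 − y_N^2 ≠ 0, the function f(x_1, y_1, …, x_N, y_N) = (1/2) arctan( (2x_1y_1 + ⋯ + 2x_Ny_N) / (x_1^2 − y_1^2 + ⋯ + x_N^2 − y_N^2) ) satisfies the minimal hypersurface equation in ℝ^{2N+1}: Σ_{k=1}^N [ ∂/∂x_k ( f_{x_k} / W ) + ∂/∂y_k ( f_{y_k} / W ) ] = 0, where W = √( 1 + Σ_{k=1}^N ( f_{x_k}^2 + f_{y_k}^2 ) ). Hence the graph of f (the Choe–Hoppe helicoid, up to homothety) is a minimal hypersurface in ℝ^{2N+1}. (Example 3.3/Remark 3.4.) -/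
/-!
Put `z_k = x_k + i y_k` and `w = ∑ z_k² = B + i A`, so that `f = ½ arg w` locally. Then
`∇f = X / S` with `S = |w|²` and `X = (B ∇A - A ∇B) / 2` polynomial, and `|∇f|² = R / S` with
`R = |z|²`, so that `∇f / W = X / V` for `V = √(S (S + R))`. Since `A` and `B` are harmonic,
`div X = 0`; and `X` is tangent to the level sets of `R` (`f` is homogeneous of degree `0`) and of
`S` (Cauchy–Riemann for `log w`), hence to those of `V`. Therefore
`div (X / V) = div X / V - ⟪X, ∇V⟫ / V² = 0`.
-/

open scoped BigOperators

open Real Topology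

section Calculus

variable {E : Type*} [NormedAddCommGroup E] [NormedSpace ℝ E] {g h : E → ℝ} {p : E}

theorem fderiv_fun_div_apply (hg : DifferentiableAt ℝ g p) (hh : DifferentiableAt ℝ h p)
    (hp : h p ≠ 0) (v : E) :
    fderiv ℝ (fun q => g q / h q) p v
      = (fderiv ℝ g p v * h p - g p * fderiv ℝ h p v) / h p ^ 2 := by
  have hinv := (hasDerivAt_inv hp).comp_hasFDerivAt p hh.hasFDerivAt
  have hmul := (hg.hasFDerivAt.fun_mul hinv).fderiv
  simp only [Function.comp_apply] at hmul
  simp only [div_eq_mul_inv, hmul, neg_smul, smul_neg, add_apply, neg_apply, smul_apply,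
    smul_eq_mul]
  field_simp
  ring

theorem fderiv_half_arctan_div_apply (hg : DifferentiableAt ℝ g p)
    (hh : DifferentiableAt ℝ h p) (hp : h p ≠ 0) (v : E) :
    fderiv ℝ (fun q => 1 / 2 * arctan (g q / h q)) p v
      = (h p * fderiv ℝ g p v - g p * fderiv ℝ h p v) / (2 * (g p ^ 2 + h p ^ 2)) := by
  have hdiv : DifferentiableAt ℝ (fun q => g q / h q) p := by fun_prop (disch := exact hp)
  rw [fderiv_const_mul hdiv.arctan, fderiv_arctan hdiv]
  simp only [_root_.smul_apply, smul_eq_mul, fderiv_fun_div_apply hg hh hp]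
  field_simp
  ring

end Calculus

section PartialDerivatives

variable {ι : Type*} [Fintype ι]

theorem fderiv_euclideanSpace_apply (i : ι) (q v : EuclideanSpace ℝ ι) :
    fderiv ℝ (fun y : EuclideanSpace ℝ ι => y i) q v = v i := by
  rw [(PiLp.hasFDerivAt_apply 2 q i).fderiv]
  rfl

variable [DecidableEq ι]

theorem Filter.EventuallyEq.pd_eq {f g : EuclideanSpace ℝ ι → ℝ} {p : EuclideanSpace ℝ ι}
    (h : f =ᶠ[𝓝 p] g) (i : ι) : pd i f p = pd i g p := by
  rw [pd, pd, h.fderiv_eq]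

theorem sum_mul_pd (g : EuclideanSpace ℝ ι → ℝ) (p v : EuclideanSpace ℝ ι) :
    ∑ i, v i * pd i g p = fderiv ℝ g p v := by
  conv_rhs => rw [← (EuclideanSpace.basisFun ι ℝ).sum_repr v]
  simp [pd]

theorem sum_pd_div {X : EuclideanSpace ℝ ι → EuclideanSpace ℝ ι} {V : EuclideanSpace ℝ ι → ℝ}
    {p : EuclideanSpace ℝ ι} (hX : DifferentiableAt ℝ X p) (hV : DifferentiableAt ℝ V p)
    (hp : V p ≠ 0) :
    ∑ i, pd i (fun q => X q i / V q) p
      = (∑ i, pd i (fun q => X q i) p) / V p - fderiv ℝ V p (X p) / V p ^ 2 := by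
  have hXi := (differentiableAt_piLp 2).1 hX
  rw [← sum_mul_pd, Finset.sum_div, Finset.sum_div, ← Finset.sum_sub_distrib]
  refine Finset.sum_congr rfl fun i _ => ?_
  simp only [pd, fderiv_fun_div_apply (hXi i) hV hp]
  field_simp

end PartialDerivatives

namespace ChoeHoppe

variable {N : ℕ}

abbrev E (N : ℕ) := EuclideanSpace ℝ (Fin N ⊕ Fin N)

noncomputable section

def A (q : E N) : ℝ := ∑ k, 2 * q (.inl k) * q (.inr k)

def B (q : E N) : ℝ := ∑ k, (q (.inl k) ^ 2 - q (.inr k) ^ 2)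

def R (q : E N) : ℝ := ∑ k, (q (.inl k) ^ 2 + q (.inr k) ^ 2)

def S (q : E N) : ℝ := A q ^ 2 + B q ^ 2

def helicoid (q : E N) : ℝ := 1 / 2 * arctan (A q / B q)

def X (q : E N) : E N :=
  WithLp.toLp 2 <| Sum.elim (fun k => B q * q (.inr k) - A q * q (.inl k))
    (fun k => B q * q (.inl k) + A q * q (.inr k))

def V (q : E N) : ℝ := √(S q * (S q + R q))

@[simp] theorem X_inl (q : E N) (k : Fin N) : X q (.inl k) = B q * q (.inr k) - A q * q (.inl k) :=
  rfl

@[simp] theorem X_inr (q : E N) (k : Fin N) : X q (.inr k) = B q * q (.inl k) + A q * q (.inr k) :=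
  rfl

@[fun_prop] theorem differentiable_A : Differentiable ℝ (A (N := N)) := by unfold A; fun_prop
@[fun_prop] theorem differentiable_B : Differentiable ℝ (B (N := N)) := by unfold B; fun_prop
@[fun_prop] theorem differentiable_R : Differentiable ℝ (R (N := N)) := by unfold R; fun_prop
@[fun_prop] theorem differentiable_S : Differentiable ℝ (S (N := N)) := by unfold S; fun_prop

theorem differentiable_X : Differentiable ℝ (X (N := N)) := by
  refine (differentiable_piLp 2).2 fun i => ?_
  cases i <;> simp only [X_inl, X_inr] <;> fun_prop

theorem fderiv_A_apply (q v : E N) :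
    fderiv ℝ A q v = ∑ k, 2 * (v (.inl k) * q (.inr k) + q (.inl k) * v (.inr k)) := by
  unfold A
  simp (disch := fun_prop) only [fderiv_fun_sum, fderiv_fun_mul, fderiv_fun_const, Pi.zero_apply,
    smul_zero, add_zero, sum_apply, add_apply, smul_apply, fderiv_euclideanSpace_apply, smul_eq_mul]
  exact Finset.sum_congr rfl fun k _ => by ring

theorem fderiv_B_apply (q v : E N) :
    fderiv ℝ B q v = ∑ k, 2 * (q (.inl k) * v (.inl k) - q (.inr k) * v (.inr k)) := by
  unfold B
  simp (disch := fun_prop) only [fderiv_fun_sum, fderiv_fun_sub, fderiv_fun_pow,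
    Nat.add_one_sub_one, pow_one, nsmul_eq_mul, Nat.cast_ofNat, sum_apply, sub_apply, smul_apply,
    fderiv_euclideanSpace_apply, smul_eq_mul]
  exact Finset.sum_congr rfl fun k _ => by ring

theorem fderiv_R_apply (q v : E N) :
    fderiv ℝ R q v = ∑ k, 2 * (q (.inl k) * v (.inl k) + q (.inr k) * v (.inr k)) := by
  unfold R
  simp (disch := fun_prop) only [fderiv_fun_sum, fderiv_fun_add, fderiv_fun_pow,
    Nat.add_one_sub_one, pow_one, nsmul_eq_mul, Nat.cast_ofNat, sum_apply, add_apply, smul_apply,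
    fderiv_euclideanSpace_apply, smul_eq_mul]
  exact Finset.sum_congr rfl fun k _ => by ring

theorem S_pos {q : E N} (hq : B q ≠ 0) : 0 < S q := by
  unfold S; positivity

theorem R_nonneg (q : E N) : 0 ≤ R q := by
  unfold R; positivity

theorem S_mul_S_add_R_pos {q : E N} (hq : B q ≠ 0) : 0 < S q * (S q + R q) :=
  mul_pos (S_pos hq) (add_pos_of_pos_of_nonneg (S_pos hq) (R_nonneg q))

theorem V_pos {q : E N} (hq : B q ≠ 0) : 0 < V q :=
  sqrt_pos.2 (S_mul_S_add_R_pos hq)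

theorem differentiableAt_V {q : E N} (hq : B q ≠ 0) : DifferentiableAt ℝ V q :=
  (by fun_prop : DifferentiableAt ℝ (fun q => S q * (S q + R q)) q).sqrt (S_mul_S_add_R_pos hq).ne'

theorem fderiv_A_single_inl (q : E N) (k : Fin N) :
    fderiv ℝ A q (EuclideanSpace.single (.inl k) 1) = 2 * q (.inr k) := by
  simp [fderiv_A_apply]

theorem fderiv_A_single_inr (q : E N) (k : Fin N) :
    fderiv ℝ A q (EuclideanSpace.single (.inr k) 1) = 2 * q (.inl k) := by
  simp [fderiv_A_apply]

theorem fderiv_B_single_inl (q : E N) (k : Fin N) :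
    fderiv ℝ B q (EuclideanSpace.single (.inl k) 1) = 2 * q (.inl k) := by
  simp [fderiv_B_apply]

theorem fderiv_B_single_inr (q : E N) (k : Fin N) :
    fderiv ℝ B q (EuclideanSpace.single (.inr k) 1) = -(2 * q (.inr k)) := by
  simp [fderiv_B_apply]

theorem pd_helicoid {q : E N} (hq : B q ≠ 0) (i : Fin N ⊕ Fin N) :
    pd i helicoid q = X q i / S q := by
  have hS := (S_pos hq).ne'
  rw [pd, show helicoid = fun q : E N => 1 / 2 * arctan (A q / B q) from rfl,
    fderiv_half_arctan_div_apply (differentiable_A q) (differentiable_B q) hq]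
  cases i with
  | inl k => rw [fderiv_A_single_inl, fderiv_B_single_inl, X_inl, S]; field_simp
  | inr k => rw [fderiv_A_single_inr, fderiv_B_single_inr, X_inr, S]; field_simp; ring

theorem sum_sq_X (q : E N) : ∑ i, X q i ^ 2 = R q * S q := by
  simp only [Fintype.sum_sum_type, X_inl, X_inr, R, S, Finset.sum_mul, ← Finset.sum_add_distrib]
  exact Finset.sum_congr rfl fun k _ => by ring

theorem sum_sq_pd_helicoid {q : E N} (hq : B q ≠ 0) :
    ∑ i, pd i helicoid q ^ 2 = R q / S q := by
  have hS := (S_pos hq).ne'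
  simp only [pd_helicoid hq, div_pow, ← Finset.sum_div, sum_sq_X]
  field_simp

theorem pd_helicoid_div_sqrt {q : E N} (hq : B q ≠ 0) (i : Fin N ⊕ Fin N) :
    pd i helicoid q / √(1 + ∑ j, pd j helicoid q ^ 2) = X q i / V q := by
  have hS := S_pos hq
  have hV : V q = S q * √(1 + R q / S q) := by
    rw [V, ← sqrt_sq hS.le, ← sqrt_mul (sq_nonneg _), sqrt_sq hS.le]
    congr 1
    field_simp
  rw [pd_helicoid hq, sum_sq_pd_helicoid hq, hV, div_div]

theorem sum_pd_X (q : E N) : ∑ i, pd i (fun q => X q i) q = 0 := by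
  simp only [Fintype.sum_sum_type, X_inl, X_inr, ← Finset.sum_add_distrib]
  refine Finset.sum_eq_zero fun k _ => ?_
  simp (disch := fun_prop) only [pd, fderiv_fun_add, fderiv_fun_sub, fderiv_fun_mul, add_apply,
    sub_apply, smul_apply, smul_eq_mul, fderiv_euclideanSpace_apply, PiLp.single_apply,
    reduceCtorEq, ↓reduceIte, fderiv_A_single_inl, fderiv_A_single_inr,
    fderiv_B_single_inl, fderiv_B_single_inr]
  ring

theorem fderiv_A_X (q : E N) : fderiv ℝ A q (X q) = 2 * B q * R q := by
  simp only [fderiv_A_apply, X_inl, X_inr, R, Finset.mul_sum]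
  exact Finset.sum_congr rfl fun k _ => by ring

theorem fderiv_B_X (q : E N) : fderiv ℝ B q (X q) = -2 * A q * R q := by
  simp only [fderiv_B_apply, X_inl, X_inr, R, Finset.mul_sum]
  exact Finset.sum_congr rfl fun k _ => by ring

theorem fderiv_R_X (q : E N) : fderiv ℝ R q (X q) = 0 := by
  calc fderiv ℝ R q (X q)
      = 2 * (B q * ∑ k, 2 * q (.inl k) * q (.inr k)
          - A q * ∑ k, (q (.inl k) ^ 2 - q (.inr k) ^ 2)) := by
        simp only [fderiv_R_apply, X_inl, X_inr, Finset.mul_sum, ← Finset.sum_sub_distrib]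
        exact Finset.sum_congr rfl fun k _ => by ring
    _ = 2 * (B q * A q - A q * B q) := rfl
    _ = 0 := by ring

theorem fderiv_S_X (q : E N) : fderiv ℝ S q (X q) = 0 := by
  unfold S
  simp (disch := fun_prop) only [fderiv_fun_add, fderiv_fun_pow, Nat.add_one_sub_one, pow_one,
    nsmul_eq_mul, Nat.cast_ofNat, add_apply, smul_apply, smul_eq_mul, fderiv_A_X, fderiv_B_X]
  ring

theorem fderiv_V_X {q : E N} (hq : B q ≠ 0) : fderiv ℝ V q (X q) = 0 := by
  rw [show V = fun q : E N => √(S q * (S q + R q)) from rfl,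
    fderiv_sqrt (f := fun q => S q * (S q + R q)) (by fun_prop) (S_mul_S_add_R_pos hq).ne']
  simp (disch := fun_prop) [fderiv_fun_mul, fderiv_fun_add, fderiv_S_X, fderiv_R_X]

end

end ChoeHoppe

open ChoeHoppe

theorem choe_hoppe_helicoid_graph_minimal_general (N : ℕ)
    (f : EuclideanSpace ℝ (Fin N ⊕ Fin N) → ℝ)
    (hf : ∀ p, f p = (1 / 2) * Real.arctan
      ((∑ k : Fin N, 2 * p (Sum.inl k) * p (Sum.inr k)) /
        (∑ k : Fin N, (p (Sum.inl k) ^ 2 - p (Sum.inr k) ^ 2))))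
    (W : EuclideanSpace ℝ (Fin N ⊕ Fin N) → ℝ)
    (hW : ∀ p, W p = Real.sqrt (1 + ∑ i : Fin N ⊕ Fin N, pd i f p ^ 2)) :
    ∀ p : EuclideanSpace ℝ (Fin N ⊕ Fin N),
      (∑ k : Fin N, (p (Sum.inl k) ^ 2 - p (Sum.inr k) ^ 2)) ≠ 0 →
      ∑ k : Fin N,
        (pd (Sum.inl k) (fun q => pd (Sum.inl k) f q / W q) p
          + pd (Sum.inr k) (fun q => pd (Sum.inr k) f q / W q) p) = 0 := by
  intro p hp
  obtain rfl : f = helicoid := funext hf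
  have hB : ∀ᶠ q in 𝓝 p, B q ≠ 0 :=
    differentiable_B.continuous.continuousAt.eventually_ne hp
  have hquot : ∀ i, (fun q => pd i helicoid q / W q)
      =ᶠ[𝓝 p] fun q => X q i / V q := fun i =>
    hB.mono fun q hq => (congrArg _ (hW q)).trans (pd_helicoid_div_sqrt hq i)
  rw [Finset.sum_add_distrib,
    ← Fintype.sum_sum_type fun i => pd i (fun q => pd i helicoid q / W q) p]
  calc ∑ i, pd i (fun q => pd i helicoid q / W q) p
      = ∑ i, pd i (fun q => X q i / V q) p :=
        Finset.sum_congr rfl fun i _ => (hquot i).pd_eq i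
    _ = (∑ i, pd i (fun q => X q i) p) / V p
          - fderiv ℝ V p (X p) / V p ^ 2 :=
        sum_pd_div (differentiable_X p) (differentiableAt_V hp)
          (V_pos hp).ne'
    _ = 0 := by rw [sum_pd_X, fderiv_V_X hp]; simp

/-- Example 3.3 / Remark 3.4: on the open set where `x₁² − y₁² + ⋯ + x_N² − y_N² ≠ 0`,
the function
`f = (1/2) arctan((2x₁y₁ + ⋯ + 2x_N y_N)/(x₁² − y₁² + ⋯ + x_N² − y_N²))`
satisfies the minimal hypersurface equation in `ℝ^{2N+1}`; hence its graph (the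
Choe–Hoppe helicoid, up to homothety) is a minimal hypersurface in `ℝ^{2N+1}`.
Here the coordinates `x_k` are indexed by `Sum.inl k` and the `y_k` by `Sum.inr k`. -/
theorem choe_hoppe_helicoid_graph_minimal (N : ℕ) (hN : 1 ≤ N)
    (f : EuclideanSpace ℝ (Fin N ⊕ Fin N) → ℝ)
    (hf : ∀ p, f p = (1 / 2) * Real.arctan
      ((∑ k : Fin N, 2 * p (Sum.inl k) * p (Sum.inr k)) /
        (∑ k : Fin N, (p (Sum.inl k) ^ 2 - p (Sum.inr k) ^ 2))))
    (W : EuclideanSpace ℝ (Fin N ⊕ Fin N) → ℝ)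
    (hW : ∀ p, W p = Real.sqrt (1 + ∑ i : Fin N ⊕ Fin N, pd i f p ^ 2)) :
    ∀ p : EuclideanSpace ℝ (Fin N ⊕ Fin N),
      (∑ k : Fin N, (p (Sum.inl k) ^ 2 - p (Sum.inr k) ^ 2)) ≠ 0 →
      ∑ k : Fin N,
        (pd (Sum.inl k) (fun q => pd (Sum.inl k) f q / W q) p
          + pd (Sum.inr k) (fun q => pd (Sum.inr k) f q / W q) p) = 0 :=
  choe_hoppe_helicoid_graph_minimal_general N f hf W hW
end

section
/- At every point (Θ, r_1, …, r_L) where λ_0^2 + λ_1^2 r_1^2 + ⋯ + λ_L^2 r_L^2 > 0, the coordinate mean curvature vector of F vanishes: Σ_{a,b} ∂_a(√det G · G^{ab} ∂_b F) = 0, where G is the metric induced by F in the coordinates (Θ, r_1, …, r_L). Hence the Barbosa–Dajczer–Jorge ruled submanifold H_Λ, swept out from an L-dimensional plane by the multi-screw motion with pitch vector Λ, is a minimal submanifold of ℝ^{2L+1}. (Example 3.5; the case N = 0 of Theorem 3.1.) -/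
/-!
Write `F(Θ, r) = ∑ₜ rₜ cₜ(λₜΘ) + λ₀Θ e`, where `cₜ` is the unit circle in the `t`-th coordinate
plane and `e` the last basis vector. Since `cₜ' = cₜ(· + π/2)`, the vectors `∂_{r_s} F = c_s(λ_sΘ)`
are orthonormal and orthogonal to `∂_Θ F = ∑ₜ λₜrₜ cₜ(λₜΘ + π/2) + λ₀ e`, whose squared length is
`φ = λ₀² + ∑ₜ λₜ²rₜ²`. So the induced metric is `diag(φ, 1, …, 1)`, and the divergence reduces to
`∂_Θ(φ^{-1/2} ∂_Θ F) + ∑ₛ ∂_{r_s}(φ^{1/2} c_s(λ_sΘ))`. As `φ` does not depend on `Θ`, the first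
term is `φ^{-1/2} ∂_Θ² F = -φ^{-1/2} ∑ₛ λₛ²rₛ cₛ`, and the second one is `φ^{-1/2} ∑ₛ λₛ²rₛ cₛ`.
-/

open scoped BigOperators

open Real Filter Topology Matrix

section PartialDerivative

variable {ι : Type*} [Fintype ι] [DecidableEq ι] {E : Type*} [NormedAddCommGroup E]
  [NormedSpace ℝ E] {f g : EuclideanSpace ℝ ι → E} {u : EuclideanSpace ℝ ι} (i : ι)

theorem pd_const (c : E) : pd i (fun _ => c) u = 0 := by
  simp [pd]

theorem pd_congr (h : f =ᶠ[𝓝 u] g) : pd i f u = pd i g u := by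
  rw [pd, pd, h.fderiv_eq]

theorem pd_add (hf : DifferentiableAt ℝ f u) (hg : DifferentiableAt ℝ g u) :
    pd i (fun q => f q + g q) u = pd i f u + pd i g u := by
  simp [pd, fderiv_fun_add hf hg]

theorem pd_sum {κ : Type*} (s : Finset κ) {f : κ → EuclideanSpace ℝ ι → E}
    (hf : ∀ k ∈ s, DifferentiableAt ℝ (f k) u) :
    pd i (fun q => ∑ k ∈ s, f k q) u = ∑ k ∈ s, pd i (f k) u := by
  simp [pd, fderiv_fun_sum hf]

theorem pd_smul {c : EuclideanSpace ℝ ι → ℝ} (hc : DifferentiableAt ℝ c u)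
    (hf : DifferentiableAt ℝ f u) :
    pd i (fun q => c q • f q) u = pd i c u • f u + c u • pd i f u := by
  simp [pd, fderiv_fun_smul hc hf, add_comm]

theorem pd_const_mul {f : EuclideanSpace ℝ ι → ℝ} (c : ℝ) (hf : DifferentiableAt ℝ f u) :
    pd i (fun q => c * f q) u = c * pd i f u := by
  simp [pd, fderiv_const_mul hf]

theorem pd_coord (j : ι) :
    pd i (fun q : EuclideanSpace ℝ ι => q j) u = if j = i then 1 else 0 := by
  rw [pd, show (fun q : EuclideanSpace ℝ ι => q j) = EuclideanSpace.proj j from rfl,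
    ContinuousLinearMap.fderiv]
  simp [PiLp.single_apply]

theorem pd_comp {φ : ℝ → E} {φ' : E} {f : EuclideanSpace ℝ ι → ℝ}
    (hφ : HasDerivAt φ φ' (f u)) (hf : DifferentiableAt ℝ f u) :
    pd i (fun q => φ (f q)) u = pd i f u • φ' := by
  have h : HasFDerivAt (fun q => φ (f q)) _ u := hφ.hasFDerivAt.comp u hf.hasFDerivAt
  rw [pd, pd, h.fderiv]
  simp

theorem pd_pow {f : EuclideanSpace ℝ ι → ℝ} (n : ℕ) (hf : DifferentiableAt ℝ f u) :
    pd i (fun q => f q ^ n) u = n * f u ^ (n - 1) * pd i f u := by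
  rw [pd_comp i (hasDerivAt_pow n (f u)) hf, smul_eq_mul, mul_comm]

end PartialDerivative

/-- `√(det G)` times the Laplace–Beltrami operator of the metric `G` applied to `F`. When `G` is
the metric induced by `F`, this is `√(det G)` times the mean curvature vector of `F`. -/
noncomputable def sqrtDetLaplacian {ι : Type*} [Fintype ι] [DecidableEq ι] {E : Type*}
    [NormedAddCommGroup E] [NormedSpace ℝ E]
    (G : EuclideanSpace ℝ ι → Matrix ι ι ℝ) (F : EuclideanSpace ℝ ι → E)
    (q : EuclideanSpace ℝ ι) : E :=
  ∑ a, ∑ b, pd a (fun q' => (√(G q').det * (G q')⁻¹ a b) • pd b F q') q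

theorem Matrix.inv_diagonal_of_ne_zero {ι : Type*} [Fintype ι] [DecidableEq ι] {d : ι → ℝ}
    (hd : ∀ a, d a ≠ 0) : (diagonal d)⁻¹ = diagonal d⁻¹ := by
  refine inv_eq_right_inv ?_
  rw [diagonal_mul_diagonal, ← diagonal_one]
  congr 1
  ext a
  exact mul_inv_cancel₀ (hd a)

/- The diagonal must be nonvanishing near `q`: where an entry vanishes, `(diagonal d)⁻¹` is the
junk value `0`, not `diagonal d⁻¹`. -/
theorem sqrtDetLaplacian_of_eventually_diagonal {ι : Type*} [Fintype ι] [DecidableEq ι]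
    {E : Type*} [NormedAddCommGroup E] [NormedSpace ℝ E] {G : EuclideanSpace ℝ ι → Matrix ι ι ℝ}
    {d : EuclideanSpace ℝ ι → ι → ℝ} {q : EuclideanSpace ℝ ι}
    (hG : ∀ᶠ q' in 𝓝 q, G q' = diagonal (d q')) (hd : ∀ᶠ q' in 𝓝 q, ∀ a, d q' a ≠ 0)
    (F : EuclideanSpace ℝ ι → E) :
    sqrtDetLaplacian G F q =
      ∑ a, pd a (fun q' => (√(∏ i, d q' i) / d q' a) • pd a F q') q := by
  refine Finset.sum_congr rfl fun a _ => ?_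
  rw [Finset.sum_eq_single a]
  · refine pd_congr a ?_
    filter_upwards [hG, hd] with q' hGq hdq
    rw [hGq, det_diagonal, inv_diagonal_of_ne_zero hdq, diagonal_apply_eq, Pi.inv_apply,
      div_eq_mul_inv]
  · intro b _ hba
    rw [← pd_const a (0 : E) (u := q)]
    refine pd_congr a ?_
    filter_upwards [hG, hd] with q' hGq hdq
    rw [hGq, inv_diagonal_of_ne_zero hdq, diagonal_apply_ne _ hba.symm, mul_zero, zero_smul]
  · simp

section Helicoid

variable {L : ℕ}

noncomputable def planeCircle (t : Fin L) (θ : ℝ) : EuclideanSpace ℝ ((Fin L × Bool) ⊕ Unit) :=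
  cos θ • EuclideanSpace.single (Sum.inl (t, false)) 1 +
    sin θ • EuclideanSpace.single (Sum.inl (t, true)) 1

theorem hasDerivAt_planeCircle (t : Fin L) (θ : ℝ) :
    HasDerivAt (planeCircle t) (planeCircle t (θ + π / 2)) θ := by
  unfold planeCircle
  rw [cos_add_pi_div_two, sin_add_pi_div_two]
  exact .fun_add (.smul_const (hasDerivAt_cos θ) _) (.smul_const (hasDerivAt_sin θ) _)

@[fun_prop]
theorem differentiable_planeCircle (t : Fin L) : Differentiable ℝ (planeCircle t) :=
  fun θ => (hasDerivAt_planeCircle t θ).differentiableAt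

theorem pd_planeCircle_comp {i : Unit ⊕ Fin L} {f : EuclideanSpace ℝ (Unit ⊕ Fin L) → ℝ}
    {u : EuclideanSpace ℝ (Unit ⊕ Fin L)} (t : Fin L) (hf : DifferentiableAt ℝ f u) :
    pd i (fun q => planeCircle t (f q)) u = pd i f u • planeCircle t (f u + π / 2) :=
  pd_comp i (hasDerivAt_planeCircle t _) hf

theorem planeCircle_add_pi (t : Fin L) (θ : ℝ) : planeCircle t (θ + π) = -planeCircle t θ := by
  simp only [planeCircle, cos_add_pi, sin_add_pi, neg_smul, neg_add]

theorem inner_planeCircle (s t : Fin L) (α β : ℝ) :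
    inner ℝ (planeCircle s α) (planeCircle t β) = if s = t then cos (α - β) else 0 := by
  by_cases hst : s = t
  · subst hst
    simp [planeCircle, inner_add_left, inner_add_right, inner_smul_left, inner_smul_right,
      EuclideanSpace.inner_single_left, cos_sub, mul_comm]
  · simp [planeCircle, inner_add_left, inner_add_right, inner_smul_left, inner_smul_right,
      EuclideanSpace.inner_single_left, hst]

theorem inner_planeCircle_single_inr (t : Fin L) (θ : ℝ) :
    inner ℝ (planeCircle t θ) (EuclideanSpace.single (Sum.inr ()) 1) = 0 := by
  simp [planeCircle, inner_add_left, inner_smul_left, EuclideanSpace.inner_single_left]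

variable (lam0 : ℝ) (lam : Fin L → ℝ)

noncomputable def helicoid (q : EuclideanSpace ℝ (Unit ⊕ Fin L)) :
    EuclideanSpace ℝ ((Fin L × Bool) ⊕ Unit) :=
  ∑ t, q (Sum.inr t) • planeCircle t (lam t * q (Sum.inl ())) +
    (lam0 * q (Sum.inl ())) • EuclideanSpace.single (Sum.inr ()) 1

noncomputable def helicoidSpeedSq (q : EuclideanSpace ℝ (Unit ⊕ Fin L)) : ℝ :=
  lam0 ^ 2 + ∑ t, lam t ^ 2 * q (Sum.inr t) ^ 2

theorem eq_helicoid
    (F : EuclideanSpace ℝ (Unit ⊕ Fin L) → EuclideanSpace ℝ ((Fin L × Bool) ⊕ Unit))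
    (hFcos : ∀ q (t : Fin L), F q (Sum.inl (t, false)) =
      q (Sum.inr t) * cos (lam t * q (Sum.inl ())))
    (hFsin : ∀ q (t : Fin L), F q (Sum.inl (t, true)) =
      q (Sum.inr t) * sin (lam t * q (Sum.inl ())))
    (hFz : ∀ q, F q (Sum.inr ()) = lam0 * q (Sum.inl ())) :
    F = helicoid lam0 lam := by
  funext q
  ext (⟨t, _ | _⟩ | ⟨⟩) <;> simp [helicoid, planeCircle, Pi.single_apply, hFcos, hFsin, hFz]

theorem pd_inl_helicoid (q : EuclideanSpace ℝ (Unit ⊕ Fin L)) :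
    pd (Sum.inl ()) (helicoid lam0 lam) q =
      ∑ t, (lam t * q (Sum.inr t)) • planeCircle t (lam t * q (Sum.inl ()) + π / 2) +
        lam0 • EuclideanSpace.single (Sum.inr ()) 1 := by
  unfold helicoid
  simp (disch := fun_prop) only [pd_add, pd_sum, pd_smul, pd_planeCircle_comp, pd_const_mul,
    pd_coord, pd_const]
  simp [smul_smul, mul_comm]

theorem pd_inr_helicoid (q : EuclideanSpace ℝ (Unit ⊕ Fin L)) (s : Fin L) :
    pd (Sum.inr s) (helicoid lam0 lam) q = planeCircle s (lam s * q (Sum.inl ())) := by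
  unfold helicoid
  simp (disch := fun_prop) only [pd_add, pd_sum, pd_smul, pd_planeCircle_comp, pd_const_mul,
    pd_coord, pd_const]
  simp

@[fun_prop]
theorem differentiable_pd_helicoid (a : Unit ⊕ Fin L) :
    Differentiable ℝ (pd a (helicoid lam0 lam)) := by
  rcases a with ⟨⟨⟩⟩ | s
  · rw [funext (pd_inl_helicoid lam0 lam)]
    fun_prop
  · rw [funext (pd_inr_helicoid lam0 lam · s)]
    fun_prop

theorem pd_inl_pd_inl_helicoid (q : EuclideanSpace ℝ (Unit ⊕ Fin L)) :
    pd (Sum.inl ()) (pd (Sum.inl ()) (helicoid lam0 lam)) q =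
      -∑ t, (lam t ^ 2 * q (Sum.inr t)) • planeCircle t (lam t * q (Sum.inl ())) := by
  rw [funext (pd_inl_helicoid lam0 lam)]
  simp (disch := fun_prop) only [pd_add, pd_sum, pd_smul, pd_planeCircle_comp, pd_const_mul,
    pd_coord, pd_const]
  simp [add_assoc, planeCircle_add_pi, smul_smul, ← Finset.sum_neg_distrib, sq, mul_right_comm]

theorem pd_inr_pd_inr_helicoid (q : EuclideanSpace ℝ (Unit ⊕ Fin L)) (s : Fin L) :
    pd (Sum.inr s) (pd (Sum.inr s) (helicoid lam0 lam)) q = 0 := by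
  rw [funext (pd_inr_helicoid lam0 lam · s)]
  simp (disch := fun_prop) only [pd_planeCircle_comp, pd_const_mul, pd_coord]
  simp

theorem inner_pd_helicoid (q : EuclideanSpace ℝ (Unit ⊕ Fin L)) (a b : Unit ⊕ Fin L) :
    inner ℝ (pd a (helicoid lam0 lam) q) (pd b (helicoid lam0 lam) q) =
      diagonal (Sum.elim (fun _ : Unit => helicoidSpeedSq lam0 lam q) fun _ : Fin L => (1 : ℝ))
        a b := by
  simp only [diagonal_apply]
  rcases a with ⟨⟨⟩⟩ | s <;> rcases b with ⟨⟨⟩⟩ | t <;>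
    simp only [pd_inl_helicoid, pd_inr_helicoid, inner_add_left, inner_add_right, sum_inner,
      inner_sum, inner_smul_left, inner_smul_right, inner_planeCircle, real_inner_comm,
      inner_planeCircle_single_inr, Sum.inr.injEq]
  · simp [helicoidSpeedSq, sq, mul_mul_mul_comm, add_comm]
  · simp
  · simp
  · split_ifs with hst
    · simp [hst]
    · rfl

@[fun_prop]
theorem differentiable_helicoidSpeedSq : Differentiable ℝ (helicoidSpeedSq lam0 lam) := by
  unfold helicoidSpeedSq
  fun_prop

theorem pd_inl_helicoidSpeedSq (q : EuclideanSpace ℝ (Unit ⊕ Fin L)) :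
    pd (Sum.inl ()) (helicoidSpeedSq lam0 lam) q = 0 := by
  unfold helicoidSpeedSq
  simp (disch := fun_prop) only [pd_add, pd_sum, pd_const_mul, pd_pow, pd_coord, pd_const]
  simp

theorem pd_inr_helicoidSpeedSq (q : EuclideanSpace ℝ (Unit ⊕ Fin L)) (s : Fin L) :
    pd (Sum.inr s) (helicoidSpeedSq lam0 lam) q = 2 * lam s ^ 2 * q (Sum.inr s) := by
  unfold helicoidSpeedSq
  simp (disch := fun_prop) only [pd_add, pd_sum, pd_const_mul, pd_pow, pd_coord, pd_const]
  simp
  ring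

theorem helicoid_divergence_eq_zero {q : EuclideanSpace ℝ (Unit ⊕ Fin L)}
    (hq : 0 < helicoidSpeedSq lam0 lam q) :
    pd (Sum.inl ()) (fun q' => (√(helicoidSpeedSq lam0 lam q') / helicoidSpeedSq lam0 lam q') •
        pd (Sum.inl ()) (helicoid lam0 lam) q') q +
      ∑ s, pd (Sum.inr s) (fun q' => √(helicoidSpeedSq lam0 lam q') •
        pd (Sum.inr s) (helicoid lam0 lam) q') q = 0 := by
  set φ := helicoidSpeedSq lam0 lam
  have hsqrt : HasDerivAt (fun x => √x) (1 / (2 * √(φ q))) (φ q) := hasDerivAt_sqrt hq.ne'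
  have hcoef : DifferentiableAt ℝ (fun x => √x / x) (φ q) :=
    hsqrt.differentiableAt.div differentiableAt_id hq.ne'
  have hr : ∀ s, pd (Sum.inr s) (fun q' => √(φ q') • pd (Sum.inr s) (helicoid lam0 lam) q') q =
      (lam s ^ 2 * q (Sum.inr s) / √(φ q)) • planeCircle s (lam s * q (Sum.inl ())) := by
    intro s
    rw [pd_smul (c := fun q' => √(φ q')) _ (hsqrt.differentiableAt.comp q (by fun_prop))
      (by fun_prop), pd_comp _ hsqrt (by fun_prop), pd_inr_helicoidSpeedSq,
      pd_inr_pd_inr_helicoid, pd_inr_helicoid, smul_zero, add_zero, smul_eq_mul]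
    congr 1
    field_simp
  rw [pd_smul (c := fun q' => √(φ q') / φ q') _ (hcoef.comp q (by fun_prop)) (by fun_prop),
    pd_comp (φ := fun x => √x / x) _ hcoef.hasDerivAt (by fun_prop), pd_inl_helicoidSpeedSq,
    zero_smul, zero_smul, zero_add, pd_inl_pd_inl_helicoid, Finset.sum_congr rfl fun s _ => hr s,
    sqrt_div_self', smul_neg, Finset.smul_sum, neg_add_eq_zero]
  refine Finset.sum_congr rfl fun s _ => ?_
  rw [smul_smul]
  congr 1
  ring

end Helicoid

theorem barbosa_dajczer_jorge_helicoid_minimal_general (L : ℕ)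
    (lam0 : ℝ) (lam : Fin L → ℝ)
    (F : EuclideanSpace ℝ (Unit ⊕ Fin L) → EuclideanSpace ℝ ((Fin L × Bool) ⊕ Unit))
    (hFcos : ∀ q (t : Fin L), F q (Sum.inl (t, false)) =
      q (Sum.inr t) * Real.cos (lam t * q (Sum.inl ())))
    (hFsin : ∀ q (t : Fin L), F q (Sum.inl (t, true)) =
      q (Sum.inr t) * Real.sin (lam t * q (Sum.inl ())))
    (hFz : ∀ q, F q (Sum.inr ()) = lam0 * q (Sum.inl ()))
    (G : EuclideanSpace ℝ (Unit ⊕ Fin L) →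
      Matrix (Unit ⊕ Fin L) (Unit ⊕ Fin L) ℝ)
    (hG : ∀ q a b, G q a b = @inner ℝ _ _ (pd a F q) (pd b F q)) :
    ∀ q : EuclideanSpace ℝ (Unit ⊕ Fin L),
      0 < lam0 ^ 2 + ∑ t : Fin L, lam t ^ 2 * q (Sum.inr t) ^ 2 →
      ∑ a, ∑ b, pd a (fun q' => (Real.sqrt (G q').det * (G q')⁻¹ a b) • pd b F q') q
        = 0 := by
  obtain rfl := eq_helicoid lam0 lam F hFcos hFsin hFz
  intro q hq
  have hG_diag : ∀ q', G q' = diagonal (Sum.elim (fun _ : Unit => helicoidSpeedSq lam0 lam q')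
      fun _ : Fin L => (1 : ℝ)) := fun q' => by
    ext a b
    rw [hG, inner_pd_helicoid]
  have hpos : ∀ᶠ q' in 𝓝 q, 0 < helicoidSpeedSq lam0 lam q' :=
    continuousAt_const.eventually_lt
      (differentiable_helicoidSpeedSq lam0 lam).continuous.continuousAt hq
  change sqrtDetLaplacian G (helicoid lam0 lam) q = 0
  rw [sqrtDetLaplacian_of_eventually_diagonal (.of_forall hG_diag)
    (hpos.mono fun q' h a => by rcases a <;> simp [h.ne'])]
  simpa [Fintype.sum_sum_type, Fintype.prod_sum_type] using helicoid_divergence_eq_zero lam0 lam hq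

/-- Example 3.5 (the case `N = 0` of Theorem 3.1): the Barbosa–Dajczer–Jorge ruled
submanifold `H_Λ`, parameterized by
`F(Θ, r₁, …, r_L) = (r₁ cos(λ₁Θ), r₁ sin(λ₁Θ), …, r_L cos(λ_LΘ), r_L sin(λ_LΘ), λ₀Θ)`,
has vanishing coordinate mean curvature vector at every point where
`λ₀² + λ₁²r₁² + ⋯ + λ_L²r_L² > 0`; hence it is a minimal submanifold of `ℝ^{2L+1}`.
The domain coordinates are indexed by `Unit ⊕ Fin L` (`Θ` then `r`); the ambient
coordinates by `(Fin L × Bool) ⊕ Unit`, with `(t, false)` the cosine component,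
`(t, true)` the sine component, and `Unit` the last coordinate `λ₀Θ`. -/
theorem barbosa_dajczer_jorge_helicoid_minimal (L : ℕ) (hL : 1 ≤ L)
    (lam0 : ℝ) (lam : Fin L → ℝ) (hΛ : ¬(lam0 = 0 ∧ ∀ t, lam t = 0))
    (F : EuclideanSpace ℝ (Unit ⊕ Fin L) → EuclideanSpace ℝ ((Fin L × Bool) ⊕ Unit))
    (hFcos : ∀ q (t : Fin L), F q (Sum.inl (t, false)) =
      q (Sum.inr t) * Real.cos (lam t * q (Sum.inl ())))
    (hFsin : ∀ q (t : Fin L), F q (Sum.inl (t, true)) =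
      q (Sum.inr t) * Real.sin (lam t * q (Sum.inl ())))
    (hFz : ∀ q, F q (Sum.inr ()) = lam0 * q (Sum.inl ()))
    (G : EuclideanSpace ℝ (Unit ⊕ Fin L) →
      Matrix (Unit ⊕ Fin L) (Unit ⊕ Fin L) ℝ)
    (hG : ∀ q a b, G q a b = @inner ℝ _ _ (pd a F q) (pd b F q)) :
    ∀ q : EuclideanSpace ℝ (Unit ⊕ Fin L),
      0 < lam0 ^ 2 + ∑ t : Fin L, lam t ^ 2 * q (Sum.inr t) ^ 2 →
      ∑ a, ∑ b, pd a (fun q' => (Real.sqrt (G q').det * (G q')⁻¹ a b) • pd b F q') q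
        = 0 :=
  barbosa_dajczer_jorge_helicoid_minimal_general L lam0 lam F hFcos hFsin hFz G hG
end

section
/- At every point (t, Θ) where λ_1^2 cos^2 t + λ_2^2 sin^2 t > 0, the map Σ satisfies the Takahashi equation Σ_{a,b} ∂_a( √det g · g^{ab} ∂_b Σ ) = −2 √det g · Σ, where g is the metric induced by Σ in the coordinates (t, Θ). By Takahashi's theorem, Σ parameterizes a minimal surface in 𝕊^3 ⊂ ℝ^4 (Lawson's ruled minimal surface). (Example 3.6, the case (L, N) = (2, 0).) -/
open scoped BigOperators

/-!
Write `Σ(t, Θ) = cos t • γ₁(Θ) + sin t • γ₂(Θ)`, where `γ₁, γ₂` are circles of angular speed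
`λ₁, λ₂` in the orthogonal planes `⟨e₀, e₁⟩` and `⟨e₂, e₃⟩`. Then `g = diag(1, w)` with
`w = λ₁² cos² t + λ₂² sin² t`, and the Takahashi operator collapses to
`∂_t(√w ∂_t Σ) + ∂_Θ(√w / w ∂_Θ Σ)`. Since `γₖ'' = -λₖ² γₖ`, the result is a combination of
`γ₁(Θ)` and `γ₂(Θ)` whose coefficients are `-2√w cos t` and `-2√w sin t` once
`(√w)' = (λ₂² - λ₁²) sin t cos t / √w` and `sin² t + cos² t = 1` are used.
-/

open Real

section Separated

variable {E : Type*} [NormedAddCommGroup E] [NormedSpace ℝ E]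
  {a c : ℝ → ℝ} {B D : ℝ → E} {a' c' : ℝ} {B' D' : E} {q : EuclideanSpace ℝ (Fin 2)}

theorem hasFDerivAt_smul_separated (ha : HasDerivAt a a' (q 0)) (hB : HasDerivAt B B' (q 1)) :
    HasFDerivAt (fun p : EuclideanSpace ℝ (Fin 2) => a (p 0) • B (p 1))
      ((EuclideanSpace.proj (𝕜 := ℝ) 0).smulRight (a' • B (q 1))
        + (EuclideanSpace.proj (𝕜 := ℝ) 1).smulRight (a (q 0) • B')) q := by
  have hproj (i : Fin 2) : HasFDerivAt (fun p : EuclideanSpace ℝ (Fin 2) => p i)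
      (EuclideanSpace.proj (𝕜 := ℝ) i) q :=
    (EuclideanSpace.proj (𝕜 := ℝ) i).hasFDerivAt
  refine ((ha.comp_hasFDerivAt q (hproj 0)).smul (hB.hasFDerivAt.comp q (hproj 1))).congr_fderiv ?_
  ext v
  simp
  module

theorem pd_zero_smul_separated_add (ha : HasDerivAt a a' (q 0)) (hB : HasDerivAt B B' (q 1))
    (hc : HasDerivAt c c' (q 0)) (hD : HasDerivAt D D' (q 1)) :
    pd 0 (fun p => a (p 0) • B (p 1) + c (p 0) • D (p 1)) q = a' • B (q 1) + c' • D (q 1) := by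
  rw [pd, ((hasFDerivAt_smul_separated ha hB).fun_add (hasFDerivAt_smul_separated hc hD)).fderiv]
  simp

theorem pd_one_smul_separated_add (ha : DifferentiableAt ℝ a (q 0)) (hB : HasDerivAt B B' (q 1))
    (hc : DifferentiableAt ℝ c (q 0)) (hD : HasDerivAt D D' (q 1)) :
    pd 1 (fun p => a (p 0) • B (p 1) + c (p 0) • D (p 1)) q = a (q 0) • B' + c (q 0) • D' := by
  rw [pd, ((hasFDerivAt_smul_separated ha.hasDerivAt hB).fun_add
    (hasFDerivAt_smul_separated hc.hasDerivAt hD)).fderiv]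
  simp

end Separated

section TrigCurve

variable {E : Type*} [NormedAddCommGroup E] [NormedSpace ℝ E]

noncomputable def trigCurve (u v : E) (l θ : ℝ) : E := cos (l * θ) • u + sin (l * θ) • v

theorem hasDerivAt_trigCurve (u v : E) (l θ : ℝ) :
    HasDerivAt (trigCurve u v l) (l • trigCurve v (-u) l θ) θ := by
  have hlin : HasDerivAt (fun θ => l * θ) l θ := by simpa using (hasDerivAt_id θ).const_mul l
  refine (((hasDerivAt_cos _).comp θ hlin).smul_const u |>.add
    (((hasDerivAt_sin _).comp θ hlin).smul_const v)).congr_deriv ?_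
  simp only [trigCurve]
  module

theorem trigCurve_neg (u v : E) (l θ : ℝ) : trigCurve (-u) (-v) l θ = -trigCurve u v l θ := by
  simp only [trigCurve, smul_neg, neg_add]

end TrigCurve

/-- The matrix inverse is junk (`0`) when `w = 0`, but then `√w = 0` kills both sides, so no
hypothesis on `w` is needed. -/
theorem sqrt_det_mul_inv_diag (w : ℝ) (a b : Fin 2) :
    √(!![1, 0; 0, w] : Matrix (Fin 2) (Fin 2) ℝ).det
        * (!![1, 0; 0, w] : Matrix (Fin 2) (Fin 2) ℝ)⁻¹ a b
      = !![√w, 0; 0, √w / w] a b := by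
  rcases eq_or_ne w 0 with rfl | hw
  · fin_cases a <;> fin_cases b <;> simp
  · rw [Matrix.inv_def]
    fin_cases a <;> fin_cases b <;> simp [Matrix.adjugate_fin_two_of, hw, div_eq_mul_inv]

theorem sum_pd_sqrt_det_smul_inv_diag {E : Type*} [NormedAddCommGroup E] [NormedSpace ℝ E]
    (w : EuclideanSpace ℝ (Fin 2) → ℝ) (f : EuclideanSpace ℝ (Fin 2) → E)
    (q : EuclideanSpace ℝ (Fin 2)) :
    ∑ a, ∑ b, pd a (fun p => (√(!![1, 0; 0, w p] : Matrix (Fin 2) (Fin 2) ℝ).det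
        * (!![1, 0; 0, w p] : Matrix (Fin 2) (Fin 2) ℝ)⁻¹ a b) • pd b f p) q
      = pd 0 (fun p => √(w p) • pd 0 f p) q + pd 1 (fun p => (√(w p) / w p) • pd 1 f p) q := by
  simp only [sqrt_det_mul_inv_diag, Fin.sum_univ_two]
  simp [pd]

noncomputable def lawsonWeight (l₁ l₂ t : ℝ) : ℝ := l₁ ^ 2 * cos t ^ 2 + l₂ ^ 2 * sin t ^ 2

theorem hasDerivAt_lawsonWeight (l₁ l₂ t : ℝ) :
    HasDerivAt (lawsonWeight l₁ l₂) (2 * (l₂ ^ 2 - l₁ ^ 2) * sin t * cos t) t := by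
  refine ((((hasDerivAt_cos t).pow 2).const_mul (l₁ ^ 2)).add
    (((hasDerivAt_sin t).pow 2).const_mul (l₂ ^ 2))).congr_deriv ?_
  simp
  ring

noncomputable def lawsonMap (l₁ l₂ : ℝ) (p : EuclideanSpace ℝ (Fin 2)) :
    EuclideanSpace ℝ (Fin 4) :=
  cos (p 0) • trigCurve (EuclideanSpace.single 0 1) (EuclideanSpace.single 1 1) l₁ (p 1)
    + sin (p 0) • trigCurve (EuclideanSpace.single 2 1) (EuclideanSpace.single 3 1) l₂ (p 1)

theorem pd_zero_lawsonMap (l₁ l₂ : ℝ) (p : EuclideanSpace ℝ (Fin 2)) :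
    pd 0 (lawsonMap l₁ l₂) p
      = -sin (p 0) • trigCurve (EuclideanSpace.single 0 1) (EuclideanSpace.single 1 1) l₁ (p 1)
        + cos (p 0) • trigCurve (EuclideanSpace.single 2 1) (EuclideanSpace.single 3 1) l₂ (p 1) :=
  pd_zero_smul_separated_add (hasDerivAt_cos _) (hasDerivAt_trigCurve _ _ _ _)
    (hasDerivAt_sin _) (hasDerivAt_trigCurve _ _ _ _)

theorem pd_one_lawsonMap (l₁ l₂ : ℝ) (p : EuclideanSpace ℝ (Fin 2)) :
    pd 1 (lawsonMap l₁ l₂) p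
      = cos (p 0) • l₁ • trigCurve (EuclideanSpace.single 1 1) (-EuclideanSpace.single 0 1) l₁ (p 1)
        + sin (p 0) • l₂ • trigCurve (EuclideanSpace.single 3 1) (-EuclideanSpace.single 2 1) l₂
          (p 1) :=
  pd_one_smul_separated_add differentiableAt_cos (hasDerivAt_trigCurve _ _ _ _)
    differentiableAt_sin (hasDerivAt_trigCurve _ _ _ _)

theorem inner_pd_lawsonMap (l₁ l₂ : ℝ) (p : EuclideanSpace ℝ (Fin 2)) (a b : Fin 2) :
    inner ℝ (pd a (lawsonMap l₁ l₂) p) (pd b (lawsonMap l₁ l₂) p)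
      = !![1, 0; 0, lawsonWeight l₁ l₂ (p 0)] a b := by
  have h₀ := sin_sq_add_cos_sq (p 0)
  have h₁ := sin_sq_add_cos_sq (l₁ * p 1)
  have h₂ := sin_sq_add_cos_sq (l₂ * p 1)
  fin_cases a <;> fin_cases b <;>
    simp [pd_zero_lawsonMap, pd_one_lawsonMap, trigCurve, lawsonWeight, PiLp.inner_apply,
      Fin.sum_univ_four, -inner_self_eq_norm_sq_to_K]
  · linear_combination sin (p 0) ^ 2 * h₁ + cos (p 0) ^ 2 * h₂ + h₀
  · ring
  · ring
  · linear_combination l₁ ^ 2 * cos (p 0) ^ 2 * h₁ + l₂ ^ 2 * sin (p 0) ^ 2 * h₂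

theorem takahashi_lawsonMap (l₁ l₂ : ℝ) (q : EuclideanSpace ℝ (Fin 2))
    (hq : 0 < lawsonWeight l₁ l₂ (q 0)) :
    pd 0 (fun p => √(lawsonWeight l₁ l₂ (p 0)) • pd 0 (lawsonMap l₁ l₂) p) q
      + pd 1 (fun p => (√(lawsonWeight l₁ l₂ (p 0)) / lawsonWeight l₁ l₂ (p 0))
          • pd 1 (lawsonMap l₁ l₂) p) q
      = -(2 * √(lawsonWeight l₁ l₂ (q 0))) • lawsonMap l₁ l₂ q := by
  have hr := (hasDerivAt_lawsonWeight l₁ l₂ (q 0)).sqrt hq.ne'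
  have hr' : DifferentiableAt ℝ (fun t => √(lawsonWeight l₁ l₂ t) / lawsonWeight l₁ l₂ t) (q 0) :=
    hr.differentiableAt.div (hasDerivAt_lawsonWeight l₁ l₂ (q 0)).differentiableAt hq.ne'
  simp only [pd_zero_lawsonMap, pd_one_lawsonMap, smul_add, smul_smul]
  rw [pd_zero_smul_separated_add (a := fun t => √(lawsonWeight l₁ l₂ t) * -sin t)
      (c := fun t => √(lawsonWeight l₁ l₂ t) * cos t)
      (hr.mul (hasDerivAt_sin _).neg) (hasDerivAt_trigCurve _ _ _ _)
      (hr.mul (hasDerivAt_cos _)) (hasDerivAt_trigCurve _ _ _ _),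
    pd_one_smul_separated_add
      (a := fun t => √(lawsonWeight l₁ l₂ t) / lawsonWeight l₁ l₂ t * (cos t * l₁))
      (c := fun t => √(lawsonWeight l₁ l₂ t) / lawsonWeight l₁ l₂ t * (sin t * l₂))
      (hr'.mul (differentiableAt_cos.mul_const _)) (hasDerivAt_trigCurve _ _ _ _)
      (hr'.mul (differentiableAt_sin.mul_const _)) (hasDerivAt_trigCurve _ _ _ _),
    trigCurve_neg, trigCurve_neg, lawsonMap]
  set w := lawsonWeight l₁ l₂ (q 0) with hw
  set r := √w
  have hr0 : r ≠ 0 := (sqrt_pos.2 hq).ne'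
  have hrw : w = r ^ 2 := (sq_sqrt hq.le).symm
  have hrr : r ^ 2 = l₁ ^ 2 * cos (q 0) ^ 2 + l₂ ^ 2 * sin (q 0) ^ 2 := by
    rw [← hrw, hw, lawsonWeight]
  have h₀ := sin_sq_add_cos_sq (q 0)
  have h₁ : 2 * (l₂ ^ 2 - l₁ ^ 2) * sin (q 0) * cos (q 0) / (2 * r) * -sin (q 0) + r * -cos (q 0)
      + r / w * (cos (q 0) * l₁) * l₁ * -1 = -(2 * r) * cos (q 0) := by
    rw [hrw]
    field_simp
    linear_combination cos (q 0) * hrr + cos (q 0) * l₁ ^ 2 * h₀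
  have h₂ : 2 * (l₂ ^ 2 - l₁ ^ 2) * sin (q 0) * cos (q 0) / (2 * r) * cos (q 0) + r * -sin (q 0)
      + r / w * (sin (q 0) * l₂) * l₂ * -1 = -(2 * r) * sin (q 0) := by
    rw [hrw]
    field_simp
    linear_combination sin (q 0) * hrr + sin (q 0) * l₂ ^ 2 * h₀
  linear_combination (norm := module)
    h₁ • trigCurve (EuclideanSpace.single (0 : Fin 4) (1 : ℝ)) (EuclideanSpace.single 1 1) l₁ (q 1)
      + h₂ • trigCurve (EuclideanSpace.single (2 : Fin 4) (1 : ℝ)) (EuclideanSpace.single 3 1) l₂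
        (q 1)

theorem lawson_ruled_surface_takahashi_general (lam1 lam2 : ℝ)
    (S : EuclideanSpace ℝ (Fin 2) → EuclideanSpace ℝ (Fin 4))
    (hS0 : ∀ q, S q 0 = Real.cos (q 0) * Real.cos (lam1 * q 1))
    (hS1 : ∀ q, S q 1 = Real.cos (q 0) * Real.sin (lam1 * q 1))
    (hS2 : ∀ q, S q 2 = Real.sin (q 0) * Real.cos (lam2 * q 1))
    (hS3 : ∀ q, S q 3 = Real.sin (q 0) * Real.sin (lam2 * q 1))
    (g : EuclideanSpace ℝ (Fin 2) → Matrix (Fin 2) (Fin 2) ℝ)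
    (hg : ∀ q a b, g q a b = @inner ℝ _ _ (pd a S q) (pd b S q)) :
    ∀ q : EuclideanSpace ℝ (Fin 2),
      0 < lam1 ^ 2 * Real.cos (q 0) ^ 2 + lam2 ^ 2 * Real.sin (q 0) ^ 2 →
      ∑ a, ∑ b, pd a (fun q' => (Real.sqrt (g q').det * (g q')⁻¹ a b) • pd b S q') q
        = (-(2 * Real.sqrt (g q).det)) • S q := by
  obtain rfl : S = lawsonMap lam1 lam2 := by
    funext p
    ext j
    fin_cases j <;> simp [lawsonMap, trigCurve, hS0, hS1, hS2, hS3]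
  obtain rfl : g = fun p => !![1, 0; 0, lawsonWeight lam1 lam2 (p 0)] := by
    funext p
    ext a b
    rw [hg, inner_pd_lawsonMap]
  intro q hq
  rw [sum_pd_sqrt_det_smul_inv_diag (fun p => lawsonWeight lam1 lam2 (p 0)),
    takahashi_lawsonMap lam1 lam2 q hq]
  simp [Matrix.det_fin_two_of]

/-- Example 3.6 (the case `(L, N) = (2, 0)`): the map
`Σ(t, Θ) = (cos t cos(λ₁Θ), cos t sin(λ₁Θ), sin t cos(λ₂Θ), sin t sin(λ₂Θ))`
into `𝕊³ ⊂ ℝ⁴` satisfies the Takahashi equation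
`Σ_{a,b} ∂_a(√det g ⋅ g^{ab} ∂_b Σ) = −2 √det g ⋅ Σ` wherever
`λ₁² cos² t + λ₂² sin² t > 0`; by Takahashi's theorem it parameterizes a minimal
surface in `𝕊³` (Lawson's ruled minimal surface). -/
theorem lawson_ruled_surface_takahashi (lam1 lam2 : ℝ) (hlam : (lam1, lam2) ≠ (0, 0))
    (S : EuclideanSpace ℝ (Fin 2) → EuclideanSpace ℝ (Fin 4))
    (hS0 : ∀ q, S q 0 = Real.cos (q 0) * Real.cos (lam1 * q 1))
    (hS1 : ∀ q, S q 1 = Real.cos (q 0) * Real.sin (lam1 * q 1))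
    (hS2 : ∀ q, S q 2 = Real.sin (q 0) * Real.cos (lam2 * q 1))
    (hS3 : ∀ q, S q 3 = Real.sin (q 0) * Real.sin (lam2 * q 1))
    (g : EuclideanSpace ℝ (Fin 2) → Matrix (Fin 2) (Fin 2) ℝ)
    (hg : ∀ q a b, g q a b = @inner ℝ _ _ (pd a S q) (pd b S q)) :
    ∀ q : EuclideanSpace ℝ (Fin 2),
      0 < lam1 ^ 2 * Real.cos (q 0) ^ 2 + lam2 ^ 2 * Real.sin (q 0) ^ 2 →
      ∑ a, ∑ b, pd a (fun q' => (Real.sqrt (g q').det * (g q')⁻¹ a b) • pd b S q') q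
        = (-(2 * Real.sqrt (g q).det)) • S q :=
  lawson_ruled_surface_takahashi_general lam1 lam2 S hS0 hS1 hS2 hS3 g hg
end
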